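/- arXiv:2206.00928 — 4 statements merged into one kernel-verified Lean document; each statement's English description precedes it below -/
import Mathlib

section
/- Let α ∈ {+,−}. Let G and H be disjoint bidirected graphs where G is a sharp α-semiradial with root s and H is an α-radial with root r. Let S ⊆ V(H) be a set of strong vertices of H, and let Ĝ be a gluing sum (G;s) ⊕ (H;S). Then for each β ∈ {+,−}: (i) a vertex x ∈ V(G)∖{s} has a (β,−α)-ditrail to r in Ĝ if and only if x has a β-ditrail to s in G; and (ii) a vertex x ∈ V(H) has a (β,−α)-ditrail to r in Ĝ if and only if it has one in H. -/
/-- A bidirected graph on vertex type `V`: each edge has two ends (`fst`, `snd`),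
each carrying a sign (`true` = `+`, `false` = `-`). Loops are edges with `fst = snd`. -/
structure BG (V : Type) where
  E : Type
  fst : E → V
  snd : E → V
  s1 : E → Bool
  s2 : E → Bool

namespace BG

variable {V : Type}

/-- A step is a traversal of an edge in one of the two directions. -/
abbrev Step (G : BG V) : Type := G.E × Bool

variable (G : BG V)

def src (st : G.Step) : V := if st.2 then G.fst st.1 else G.snd st.1
def tgt (st : G.Step) : V := if st.2 then G.snd st.1 else G.fst st.1
/-- sign of the edge at the source end of the step -/
def ssign (st : G.Step) : Bool := if st.2 then G.s1 st.1 else G.s2 st.1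
/-- sign of the edge at the target end of the step -/
def tsign (st : G.Step) : Bool := if st.2 then G.s2 st.1 else G.s1 st.1

/-- `p` is a ditrail from `x` to `y`: an edge-simple walk such that at each internal
vertex the sign of the entering edge-end and the sign of the leaving edge-end are opposite. -/
def IsDitrail (p : List G.Step) (x y : V) : Prop :=
  (p.map Prod.fst).Nodup ∧
  List.Chain' (fun a b => G.tgt a = G.src b ∧ G.tsign a = !G.ssign b) p ∧
  (∀ st, p.head? = some st → G.src st = x) ∧
  (∀ st, p.getLast? = some st → G.tgt st = y) ∧
  (p = [] → x = y)

/-- There is an `(α, β)`-ditrail from `x` to `y` using only edges from `Es` and avoiding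
the vertex set `A`.  The trivial (empty) ditrail from `x` to `x` counts as an
`(!β, β)`-ditrail for each `β`. -/
def ReachWA (Es : Set G.E) (A : Set V) (α β : Bool) (x y : V) : Prop :=
  ∃ p : List G.Step, G.IsDitrail p x y ∧ (∀ st ∈ p, st.1 ∈ Es) ∧
    x ∉ A ∧ (∀ st ∈ p, G.tgt st ∉ A) ∧
    (p.head?.map G.ssign).getD (!β) = α ∧ (p.getLast?.map G.tsign).getD β = β

/-- There is an `(α, β)`-ditrail from `x` to `y` using only edges from `Es`. -/
def ReachW (Es : Set G.E) (α β : Bool) (x y : V) : Prop := G.ReachWA Es ∅ α β x y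

/-- There is an `(α, β)`-ditrail from `x` to `y` in `G`. -/
def Reach (α β : Bool) (x y : V) : Prop := G.ReachW Set.univ α β x y

/-- There is an `α`-ditrail from `x` to `y` in `G` (only the starting sign is constrained). -/
def ReachS (α : Bool) (x y : V) : Prop := ∃ β, G.Reach α β x y

/-- There is an `α`-ditrail from `x` to `y` using only edges from `Es`. -/
def ReachWS (Es : Set G.E) (α : Bool) (x y : V) : Prop := ∃ β, G.ReachW Es α β x y

def Adj (u v : V) : Prop :=
  ∃ e : G.E, (G.fst e = u ∧ G.snd e = v) ∨ (G.fst e = v ∧ G.snd e = u)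

/-- `G` is an `α`-radial with root `r`. -/
def IsRadial (α : Bool) (r : V) : Prop := ∀ v, G.Reach α (!α) v r
/-- `G` is an `α`-semiradial with root `r`. -/
def IsSemiradial (α : Bool) (r : V) : Prop := ∀ v, G.ReachS α v r

/-- `x` is an (`α`-)strong vertex with respect to `r`. -/
def StrongVtx (α : Bool) (r x : V) : Prop :=
  G.Reach α (!α) x r ∧ G.Reach (!α) (!α) x r
/-- `x` is a sublinear vertex with respect to `r`. -/
def SublinearVtx (α : Bool) (r x : V) : Prop :=
  G.Reach α (!α) x r ∧ ¬ G.Reach (!α) (!α) x r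
/-- `x` is an absolute vertex with respect to `r`. -/
def AbsoluteVtx (r x : V) : Prop := ∀ α : Bool, G.ReachS α x r
/-- `x` is an `α`-linear vertex with respect to `r`. -/
def LinearVtx (α : Bool) (r x : V) : Prop := G.ReachS α x r ∧ ¬ G.ReachS (!α) x r

/-- sharpness at the root: every neighbor of `r` is linear. -/
def SharpAt (α : Bool) (r : V) : Prop := ∀ v, G.Adj v r → G.LinearVtx α r v

/-- `v` is joined to `r` by an edge whose end at `r` has sign `!α`. -/
def OppNbr (α : Bool) (r v : V) : Prop :=
  ∃ e : G.E, (G.fst e = r ∧ G.snd e = v ∧ G.s1 e = !α) ∨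
    (G.snd e = r ∧ G.fst e = v ∧ G.s2 e = !α)

/-- roundness: every vertex joined to `r` by an edge whose end at `r` has sign `!α` is strong. -/
def RoundAt (α : Bool) (r : V) : Prop := ∀ v, G.OppNbr α r v → G.StrongVtx α r v

/-- `e` is a cut edge of `S` whose end in `S` carries the sign `γ`. -/
def CutSign (S : Set V) (γ : Bool) (e : G.E) : Prop :=
  (G.fst e ∈ S ∧ G.snd e ∉ S ∧ G.s1 e = γ) ∨
  (G.snd e ∈ S ∧ G.fst e ∉ S ∧ G.s2 e = γ)

/-- edges of the subgraph of `G` induced by `S` -/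
def inducedEdges (S : Set V) : Set G.E := {e | G.fst e ∈ S ∧ G.snd e ∈ S}

/-- a simple diear relative to `S`: a nonempty ditrail whose first and last vertices
lie in `S` and whose internal vertices avoid `S`. -/
def IsSimpleDiear (S : Set V) (p : List G.Step) : Prop :=
  p ≠ [] ∧ ∃ u v, G.IsDitrail p u v ∧ u ∈ S ∧ v ∈ S ∧
    ∀ w ∈ p.dropLast.map G.tgt, w ∉ S

/-- a scoop diear relative to `S` with grip `e`: of the form `(y,e,x) + P` where `y ∈ S`,
`x ∉ S`, and `P` is a ditrail from `x` back to `y` ending with the reverse traversal of `e`,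
whose internal vertices avoid `S`. -/
def IsScoopDiear (S : Set V) (e : G.E) (p : List G.Step) : Prop :=
  ∃ d q, p = (e, d) :: q ∧ G.src (e, d) ∈ S ∧ G.tgt (e, d) ∉ S ∧
    G.IsDitrail q (G.tgt (e, d)) (G.src (e, d)) ∧
    q.getLast? = some (e, !d) ∧
    (∀ st, q.head? = some st → G.ssign st = !(G.tsign (e, d))) ∧
    ∀ w ∈ q.dropLast.map G.tgt, w ∉ S

/-- A subgraph of `G`. -/
structure Sub (G : BG V) where
  verts : Set V
  edges : Set G.E
  fst_mem : ∀ e ∈ edges, G.fst e ∈ verts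
  snd_mem : ∀ e ∈ edges, G.snd e ∈ verts

variable {G}

def Sub.le (K L : G.Sub) : Prop := K.verts ⊆ L.verts ∧ K.edges ⊆ L.edges

def Sub.union (K L : G.Sub) : G.Sub where
  verts := K.verts ∪ L.verts
  edges := K.edges ∪ L.edges
  fst_mem := fun e he => he.elim (fun h => Or.inl (K.fst_mem e h)) (fun h => Or.inr (L.fst_mem e h))
  snd_mem := fun e he => he.elim (fun h => Or.inl (K.snd_mem e h)) (fun h => Or.inr (L.snd_mem e h))

/-- the subgraph `K` is an `α`-semiradial with root `r`. -/
def Sub.IsSemiradial (K : G.Sub) (α : Bool) (r : V) : Prop :=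
  r ∈ K.verts ∧ ∀ v ∈ K.verts, G.ReachWS K.edges α v r

/-- the subgraph `K` is an absolute semiradial with root `r`. -/
def Sub.IsAbsolute (K : G.Sub) (r : V) : Prop := ∀ α : Bool, K.IsSemiradial α r

/-- the subgraph `K` is an `α`-radial with root `r`. -/
def Sub.IsRadial (K : G.Sub) (α : Bool) (r : V) : Prop :=
  r ∈ K.verts ∧ ∀ v ∈ K.verts, G.ReachW K.edges α (!α) v r

/-- the subgraph `K` is a strong `α`-radial with root `r`. -/
def Sub.IsStrong (K : G.Sub) (α : Bool) (r : V) : Prop :=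
  K.IsRadial α r ∧ ∀ v ∈ K.verts, G.ReachW K.edges (!α) (!α) v r

/-- the subgraph `K` is an almost strong `α`-radial with root `r`. -/
def Sub.IsAlmostStrong (K : G.Sub) (α : Bool) (r : V) : Prop :=
  K.IsRadial α r ∧ (∀ v ∈ K.verts, v ≠ r → G.ReachW K.edges (!α) (!α) v r) ∧
    ¬ G.ReachW K.edges (!α) (!α) r r

/-- the subgraph `K` is a linear `α`-semiradial with root `r`: no loop at `r`,
and no nontrivial `(!α)`-ditrail (within `K`) to `r`. -/
def Sub.IsLinearSR (K : G.Sub) (α : Bool) (r : V) : Prop :=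
  K.IsSemiradial α r ∧ (¬ ∃ e ∈ K.edges, G.fst e = r ∧ G.snd e = r) ∧
    ∀ x p st, G.IsDitrail p x r → (∀ st' ∈ p, st'.1 ∈ K.edges) →
      p.head? = some st → G.ssign st = α

/-- candidate for the linear ground: a linear `α`-semiradial with root `r`
all of whose non-root vertices are linear in `G`. -/
def Sub.IsLinearGroundCand (K : G.Sub) (α : Bool) (r : V) : Prop :=
  K.IsLinearSR α r ∧ ∀ v ∈ K.verts, v ≠ r → G.LinearVtx α r v

/-- candidate for the extended ground over the almost strong ground `H`. -/
def Sub.IsExtCand (H K : G.Sub) (α : Bool) (r : V) : Prop :=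
  H.le K ∧ K.IsRadial α r ∧ ∀ v ∈ K.verts, v ∉ H.verts → G.SublinearVtx α r v

/-- the first shell of the extended ground `I` over the almost strong ground `H`:
shell vertices having an `(α,!α)`-ditrail to `r` within `I` avoiding `V(H) \ {r}`. -/
def firstShell (H I : G.Sub) (α : Bool) (r : V) : Set V :=
  {x | x ∈ I.verts ∧ x ∉ H.verts ∧ G.ReachWA I.edges (H.verts \ {r}) α (!α) x r}

/-- adding new edges to `G`: each `f : F` becomes an edge between `a f` and `b f`
with signs `sa f` and `sb f` at these ends. -/
def addE (G : BG V) {F : Type} (a b : F → V) (sa sb : F → Bool) : BG V where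
  E := G.E ⊕ F
  fst := Sum.elim G.fst a
  snd := Sum.elim G.snd b
  s1 := Sum.elim G.s1 sa
  s2 := Sum.elim G.s2 sb

/-- deleting the edges in `D` from `G`. -/
def delE (G : BG V) (D : Set G.E) : BG V where
  E := {e : G.E // e ∉ D}
  fst e := G.fst e.1
  snd e := G.snd e.1
  s1 e := G.s1 e.1
  s2 e := G.s2 e.1

/-- contracting the vertex set `S` of `G` to the single vertex `r` (deleting the
edges lying within `S`, i.e. the arising loops). -/
noncomputable def contract (G : BG V) (S : Set V) (r : V) : BG V where
  E := {e : G.E // ¬(G.fst e ∈ S ∧ G.snd e ∈ S)}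
  fst e := @ite _ (G.fst e.1 ∈ S) (Classical.propDecidable _) r (G.fst e.1)
  snd e := @ite _ (G.snd e.1 ∈ S) (Classical.propDecidable _) r (G.snd e.1)
  s1 e := G.s1 e.1
  s2 e := G.s2 e.1

/-- a gluing sum `(G; s) ⊕ (H; T)`: every edge-end of `G` at `s` is redirected
to some vertex of `H` (given by `f1`, `f2`), keeping all signs. -/
noncomputable def glue {VG VH : Type} (G : BG VG) (H : BG VH) (s : VG)
    (f1 f2 : G.E → VH) : BG (VG ⊕ VH) where
  E := G.E ⊕ H.E
  fst := Sum.elim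
    (fun e => @ite _ (G.fst e = s) (Classical.propDecidable _)
      (Sum.inr (f1 e)) (Sum.inl (G.fst e)))
    (fun e => Sum.inr (H.fst e))
  snd := Sum.elim
    (fun e => @ite _ (G.snd e = s) (Classical.propDecidable _)
      (Sum.inr (f2 e)) (Sum.inl (G.snd e)))
    (fun e => Sum.inr (H.snd e))
  s1 := Sum.elim G.s1 H.s1
  s2 := Sum.elim G.s2 H.s2

/-- the copy of `H` inside a gluing sum, as a subgraph. -/
noncomputable def glueHcopy {VG VH : Type} (G : BG VG) (H : BG VH) (s : VG)
    (f1 f2 : G.E → VH) : (glue G H s f1 f2).Sub where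
  verts := Set.range Sum.inr
  edges := Set.range Sum.inr
  fst_mem := by rintro _ ⟨e, rfl⟩; exact ⟨H.fst e, rfl⟩
  snd_mem := by rintro _ ⟨e, rfl⟩; exact ⟨H.snd e, rfl⟩

end BG
section DitrailLemmas

variable {V : Type} {G : BG V}

lemma ditrail_nil (x : V) : G.IsDitrail [] x x := by
  refine ⟨List.nodup_nil, List.isChain_nil, ?_, ?_, fun _ => rfl⟩ <;>
    · intro st h; cases h

lemma mem_of_getLast? {α : Type*} {l : List α} {a : α} (h : l.getLast? = some a) : a ∈ l := by
  obtain ⟨h2, rfl⟩ := List.mem_getLast?_eq_getLast (Option.mem_def.mpr h)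
  exact List.getLast_mem _

lemma dropWhile_head_false {α : Type*} {c : α → Bool} :
    ∀ {l : List α} {a : α} {t : List α}, l.dropWhile c = a :: t → c a = false := by
  intro l
  induction l with
  | nil => intro a t h; simp [List.dropWhile] at h
  | cons x xs ih =>
    intro a t h
    cases hcx : c x
    · rw [List.dropWhile_cons, hcx] at h
      simp only [Bool.false_eq_true, if_false, List.cons.injEq] at h
      obtain ⟨rfl, -⟩ := h; exact hcx
    · rw [List.dropWhile_cons, hcx] at h
      simp only [if_true] at h
      exact ih h

lemma ditrail_cons_elim {st : G.Step} {p : List G.Step} {x y : V}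
    (h : G.IsDitrail (st :: p) x y) :
    G.src st = x ∧ G.IsDitrail p (G.tgt st) y ∧
      (∀ st' ∈ p.head?, G.tsign st = !G.ssign st') ∧ st.1 ∉ p.map Prod.fst := by
  obtain ⟨n, c, hh, hl, -⟩ := h
  rw [List.map_cons, List.nodup_cons] at n
  simp only [List.Chain', List.isChain_cons] at c
  refine ⟨hh st rfl, ⟨n.2, c.2, ?_, ?_, ?_⟩, fun st' h' => (c.1 st' h').2, n.1⟩
  · exact fun st' h' => (c.1 st' h').1.symm
  · intro st' h'
    exact hl st' (List.mem_getLast?_cons (Option.mem_def.mpr h'))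
  · intro hp; subst hp
    exact hl st rfl

lemma ditrail_cons_intro {st : G.Step} {p : List G.Step} {x y : V}
    (h1 : G.src st = x) (h2 : G.IsDitrail p (G.tgt st) y)
    (h3 : ∀ st' ∈ p.head?, G.tsign st = !G.ssign st') (h4 : st.1 ∉ p.map Prod.fst) :
    G.IsDitrail (st :: p) x y := by
  obtain ⟨n, c, hh, hl, he⟩ := h2
  refine ⟨?_, ?_, ?_, ?_, fun h => by cases h⟩
  · rw [List.map_cons, List.nodup_cons]; exact ⟨h4, n⟩
  · simp only [List.Chain', List.isChain_cons]
    exact ⟨fun b hb => ⟨(hh b hb).symm, h3 b hb⟩, c⟩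
  · intro st' h'; cases h'; exact h1
  · intro st' h'
    cases p with
    | nil =>
      rw [List.getLast?_singleton] at h'
      cases h'; exact he rfl
    | cons a l => exact hl st' (by rwa [List.getLast?_cons_cons] at h')

end DitrailLemmas
section AppendLemmas

variable {V : Type} {G : BG V}

lemma ditrail_append {p q : List G.Step} {x v y : V}
    (h1 : G.IsDitrail p x v) (h2 : G.IsDitrail q v y)
    (hd : ∀ a ∈ p, ∀ b ∈ q, a.1 ≠ b.1)
    (hj : ∀ a b, p.getLast? = some a → q.head? = some b → G.tsign a = !G.ssign b) :
    G.IsDitrail (p ++ q) x y := by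
  induction p generalizing x with
  | nil =>
    have : x = v := h1.2.2.2.2 rfl
    subst this
    simpa using h2
  | cons st p ih =>
    obtain ⟨hsrc, hsub, hsig, hne⟩ := ditrail_cons_elim h1
    rw [List.cons_append]
    refine ditrail_cons_intro hsrc
      (ih hsub (fun a ha b hb => hd a (List.mem_cons_of_mem _ ha) b hb)
        (fun a b ha hb => hj a b (List.mem_getLast?_cons (Option.mem_def.mpr ha)) hb)) ?_ ?_
    · intro st' h'
      cases p with
      | nil =>
        simp only [List.nil_append] at h'
        exact hj st st' (by simp) h'
      | cons a l =>
        simp only [List.cons_append, List.head?_cons] at h'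
        cases h'
        exact hsig _ rfl
    · rw [List.map_append, List.mem_append]
      rintro (h | h)
      · exact hne h
      · obtain ⟨b, hb, hb2⟩ := List.mem_map.mp h
        exact hd st (List.mem_cons_self) b hb hb2.symm

lemma ditrail_append_elim {p q : List G.Step} {x y : V}
    (h : G.IsDitrail (p ++ q) x y) :
    ∃ v, G.IsDitrail p x v ∧ G.IsDitrail q v y ∧
      (∀ a b, p.getLast? = some a → q.head? = some b → G.tsign a = !G.ssign b) ∧
      (∀ a, p.getLast? = some a → v = G.tgt a) ∧ (p = [] → v = x) ∧
      (∀ a ∈ p, ∀ b ∈ q, a.1 ≠ b.1) := by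
  induction p generalizing x with
  | nil =>
    refine ⟨x, ditrail_nil x, by simpa using h, ?_, ?_, fun _ => rfl, ?_⟩
    · intro a b ha; cases ha
    · intro a ha; cases ha
    · intro a ha; cases ha
  | cons st p ih =>
    rw [List.cons_append] at h
    obtain ⟨hsrc, hsub, hsig, hne⟩ := ditrail_cons_elim h
    obtain ⟨v, dP, dQ, hjj, hv, hv0, hdisj⟩ := ih hsub
    refine ⟨v, ?_, dQ, ?_, ?_, ?nilc, ?_⟩
    case nilc => intro h'; cases h'
    · refine ditrail_cons_intro hsrc dP ?_ ?_
      · intro st' h'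
        cases p with
        | nil => cases h'
        | cons a l =>
          cases h'
          exact hsig _ rfl
      · intro hmem
        exact hne (by rw [List.map_append, List.mem_append]; exact Or.inl hmem)
    · intro a b ha hb
      cases p with
      | nil =>
        rw [List.getLast?_singleton] at ha
        cases ha
        exact hsig b (by simpa using hb)
      | cons a' l =>
        rw [List.getLast?_cons_cons] at ha
        exact hjj a b ha hb
    · intro a ha
      cases p with
      | nil =>
        rw [List.getLast?_singleton] at ha
        cases ha
        exact hv0 rfl
      | cons a' l =>
        rw [List.getLast?_cons_cons] at ha
        exact hv a ha
    · intro a ha b hb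
      rcases List.mem_cons.mp ha with rfl | ha'
      · intro hab
        exact hne (by rw [List.map_append, List.mem_append, hab]
                      exact Or.inr (List.mem_map_of_mem hb))
      · exact hdisj a ha' b hb

end AppendLemmas
/-- the embedding of `G`-steps into steps of a gluing sum -/
def embG {E F : Type} (st : E × Bool) : (E ⊕ F) × Bool := (Sum.inl st.1, st.2)

/-- the embedding of `H`-steps into steps of a gluing sum -/
def embH {E F : Type} (st : F × Bool) : (E ⊕ F) × Bool := (Sum.inr st.1, st.2)

section GlueStep

variable {VG VH : Type} {G : BG VG} {H : BG VH} {s : VG} {f1 f2 : G.E → VH}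

lemma embG_ssign (st : G.Step) :
    (BG.glue G H s f1 f2).ssign (embG st) = G.ssign st := by
  rcases st with ⟨e, d⟩
  cases d <;> simp [embG, BG.glue, BG.ssign]

lemma embG_tsign (st : G.Step) :
    (BG.glue G H s f1 f2).tsign (embG st) = G.tsign st := by
  rcases st with ⟨e, d⟩
  cases d <;> simp [embG, BG.glue, BG.tsign]

lemma embH_ssign (st : H.Step) :
    (BG.glue G H s f1 f2).ssign (embH st) = H.ssign st := by
  rcases st with ⟨e, d⟩
  cases d <;> simp [embH, BG.glue, BG.ssign]

lemma embH_tsign (st : H.Step) :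
    (BG.glue G H s f1 f2).tsign (embH st) = H.tsign st := by
  rcases st with ⟨e, d⟩
  cases d <;> simp [embH, BG.glue, BG.tsign]

lemma embH_src (st : H.Step) :
    (BG.glue G H s f1 f2).src (embH st) = Sum.inr (H.src st) := by
  rcases st with ⟨e, d⟩
  cases d <;> simp [embH, BG.glue, BG.src]

lemma embH_tgt (st : H.Step) :
    (BG.glue G H s f1 f2).tgt (embH st) = Sum.inr (H.tgt st) := by
  rcases st with ⟨e, d⟩
  cases d <;> simp [embH, BG.glue, BG.tgt]

lemma embG_src (st : G.Step) (h : G.src st ≠ s) :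
    (BG.glue G H s f1 f2).src (embG st) = Sum.inl (G.src st) := by
  rcases st with ⟨e, d⟩
  cases d <;>
    simp only [BG.src, embG, BG.glue, Sum.elim_inl, if_true, Bool.false_eq_true, if_false] at h ⊢ <;>
    rw [if_neg h]

lemma embG_tgt (st : G.Step) (h : G.tgt st ≠ s) :
    (BG.glue G H s f1 f2).tgt (embG st) = Sum.inl (G.tgt st) := by
  rcases st with ⟨e, d⟩
  cases d <;>
    simp only [BG.tgt, embG, BG.glue, Sum.elim_inl, if_true, Bool.false_eq_true, if_false] at h ⊢ <;>
    rw [if_neg h]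

lemma embG_src_s (st : G.Step) (h : G.src st = s) :
    (BG.glue G H s f1 f2).src (embG st)
      = Sum.inr (if st.2 then f1 st.1 else f2 st.1) := by
  rcases st with ⟨e, d⟩
  cases d <;>
    simp only [BG.src, embG, BG.glue, Sum.elim_inl, if_true, Bool.false_eq_true, if_false] at h ⊢ <;>
    rw [if_pos h]

lemma embG_tgt_s (st : G.Step) (h : G.tgt st = s) :
    (BG.glue G H s f1 f2).tgt (embG st)
      = Sum.inr (if st.2 then f2 st.1 else f1 st.1) := by
  rcases st with ⟨e, d⟩
  cases d <;>
    simp only [BG.tgt, embG, BG.glue, Sum.elim_inl, if_true, Bool.false_eq_true, if_false] at h ⊢ <;>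
    rw [if_pos h]

end GlueStep
section GlueClassify

variable {VG VH : Type} {G : BG VG} {H : BG VH} {s : VG} {f1 f2 : G.E → VH}

lemma rev_src (G : BG VG) (e : G.E) (d : Bool) : G.src (e, !d) = G.tgt (e, d) := by
  cases d <;> simp [BG.src, BG.tgt]

lemma rev_tgt (G : BG VG) (e : G.E) (d : Bool) : G.tgt (e, !d) = G.src (e, d) := by
  cases d <;> simp [BG.src, BG.tgt]

lemma rev_ssign (G : BG VG) (e : G.E) (d : Bool) : G.ssign (e, !d) = G.tsign (e, d) := by
  cases d <;> simp [BG.ssign, BG.tsign]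

lemma step_src_inl {st : (BG.glue G H s f1 f2).Step} {x : VG}
    (h : (BG.glue G H s f1 f2).src st = Sum.inl x) :
    ∃ e : G.E, st = embG (e, st.2) ∧ G.src (e, st.2) = x ∧ G.src (e, st.2) ≠ s := by
  rcases st with ⟨es, d⟩
  cases es with
  | inr he =>
    rw [show ((Sum.inr he, d) : (BG.glue G H s f1 f2).Step) = embH (he, d) from rfl,
      embH_src] at h
    cases h
  | inl e =>
    by_cases hs : G.src (e, d) = s
    · rw [show ((Sum.inl e, d) : (BG.glue G H s f1 f2).Step) = embG (e, d) from rfl,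
        embG_src_s _ hs] at h
      cases h
    · rw [show ((Sum.inl e, d) : (BG.glue G H s f1 f2).Step) = embG (e, d) from rfl,
        embG_src _ hs] at h
      exact ⟨e, rfl, Sum.inl.inj h, hs⟩

lemma step_tgt_inl {st : (BG.glue G H s f1 f2).Step} {x : VG}
    (h : (BG.glue G H s f1 f2).tgt st = Sum.inl x) :
    ∃ e : G.E, st = embG (e, st.2) ∧ G.tgt (e, st.2) = x ∧ G.tgt (e, st.2) ≠ s := by
  rcases st with ⟨es, d⟩
  cases es with
  | inr he =>
    rw [show ((Sum.inr he, d) : (BG.glue G H s f1 f2).Step) = embH (he, d) from rfl,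
      embH_tgt] at h
    cases h
  | inl e =>
    by_cases hs : G.tgt (e, d) = s
    · rw [show ((Sum.inl e, d) : (BG.glue G H s f1 f2).Step) = embG (e, d) from rfl,
        embG_tgt_s _ hs] at h
      cases h
    · rw [show ((Sum.inl e, d) : (BG.glue G H s f1 f2).Step) = embG (e, d) from rfl,
        embG_tgt _ hs] at h
      exact ⟨e, rfl, Sum.inl.inj h, hs⟩

lemma step_src_inr_of_inl {e : G.E} {d : Bool} {v : VH}
    (h : (BG.glue G H s f1 f2).src (Sum.inl e, d) = Sum.inr v) : G.src (e, d) = s := by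
  by_contra hs
  rw [show ((Sum.inl e, d) : (BG.glue G H s f1 f2).Step) = embG (e, d) from rfl,
    embG_src _ hs] at h
  cases h

lemma step_tgt_inr_of_inl {e : G.E} {d : Bool} {v : VH}
    (h : (BG.glue G H s f1 f2).tgt (Sum.inl e, d) = Sum.inr v) : G.tgt (e, d) = s := by
  by_contra hs
  rw [show ((Sum.inl e, d) : (BG.glue G H s f1 f2).Step) = embG (e, d) from rfl,
    embG_tgt _ hs] at h
  cases h

end GlueClassify
section GlueTrailMaps

variable {VG VH : Type} {G : BG VG} {H : BG VH} {s : VG} {f1 f2 : G.E → VH}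

lemma fst_map_embG (l : List (G.Step)) :
    (l.map (embG (F := H.E))).map Prod.fst = (l.map Prod.fst).map Sum.inl := by
  rw [List.map_map, List.map_map]; rfl

lemma fst_map_embH (l : List (H.Step)) :
    (l.map (embH (E := G.E))).map Prod.fst = (l.map Prod.fst).map Sum.inr := by
  rw [List.map_map, List.map_map]; rfl

lemma head?_map_embG {l : List (G.Step)} {st : G.Step} (h : l.head? = some st) :
    (l.map (embG (F := H.E))).head? = some (embG st) := by
  rw [List.head?_map, h]; rfl

lemma head?_map_embH {l : List (H.Step)} {st : H.Step} (h : l.head? = some st) :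
    (l.map (embH (E := G.E))).head? = some (embH st) := by
  rw [List.head?_map, h]; rfl

lemma demapG :
    ∀ (q : List (BG.glue G H s f1 f2).Step) (x y : VG),
      (BG.glue G H s f1 f2).IsDitrail q (Sum.inl x) (Sum.inl y) →
      (∀ st ∈ q, ∃ z : VG, (BG.glue G H s f1 f2).tgt st = Sum.inl z) →
      ∃ q' : List G.Step, q = q'.map embG ∧ G.IsDitrail q' x y ∧ ∀ st ∈ q', G.tgt st ≠ s := by
  intro q
  induction q with
  | nil =>
    intro x y h _
    have hxy : x = y := Sum.inl.inj (h.2.2.2.2 rfl)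
    subst hxy
    exact ⟨[], rfl, ditrail_nil x, fun st h => by cases h⟩
  | cons st q ih =>
    intro x y h hc
    obtain ⟨hsrc, hsub, hsig, hne⟩ := ditrail_cons_elim h
    obtain ⟨e, hst, hsx, hss⟩ := step_src_inl hsrc
    obtain ⟨z, hz⟩ := hc st (List.mem_cons_self)
    have htgts : G.tgt (e, st.2) ≠ s := by
      intro hts
      rw [hst, embG_tgt_s _ hts] at hz
      cases hz
    have htgt : (BG.glue G H s f1 f2).tgt st = Sum.inl (G.tgt (e, st.2)) := by
      rw [hst]; exact embG_tgt _ htgts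
    rw [htgt] at hsub
    obtain ⟨q', rfl, hq', hq's⟩ :=
      ih (G.tgt (e, st.2)) y hsub (fun st' h' => hc st' (List.mem_cons_of_mem _ h'))
    refine ⟨(e, st.2) :: q', by rw [List.map_cons, ← hst]; rfl, ?_, ?_⟩
    · refine ditrail_cons_intro hsx hq' ?_ ?_
      · intro st' h'
        have := hsig (embG st') (Option.mem_def.mpr (head?_map_embG (Option.mem_def.mp h')))
        rw [hst, embG_tsign, embG_ssign] at this
        exact this
      · intro hmem
        apply hne
        erw [fst_map_embG, hst]
        exact List.mem_map_of_mem hmem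
    · intro st' h'
      rcases List.mem_cons.mp h' with rfl | h''
      · exact htgts
      · exact hq's st' h''

lemma demapH :
    ∀ (q : List (BG.glue G H s f1 f2).Step) (x y : VH),
      (BG.glue G H s f1 f2).IsDitrail q (Sum.inr x) (Sum.inr y) →
      (∀ st ∈ q, ∃ he : H.E, st.1 = Sum.inr he) →
      ∃ q' : List H.Step, q = q'.map embH ∧ H.IsDitrail q' x y := by
  intro q
  induction q with
  | nil =>
    intro x y h _
    have hxy : x = y := Sum.inr.inj (h.2.2.2.2 rfl)
    subst hxy
    exact ⟨[], rfl, ditrail_nil x⟩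
  | cons st q ih =>
    intro x y h hc
    obtain ⟨hsrc, hsub, hsig, hne⟩ := ditrail_cons_elim h
    rcases st with ⟨es, d⟩
    obtain ⟨he, hst1⟩ := hc (es, d) (List.mem_cons_self)
    have hes : es = Sum.inr he := hst1
    subst hes
    have hst : ((Sum.inr he, d) : (BG.glue G H s f1 f2).Step) = embH (he, d) := rfl
    rw [hst, embH_src] at hsrc
    rw [hst, embH_tgt] at hsub
    obtain ⟨q', rfl, hq'⟩ :=
      ih (H.tgt (he, d)) y hsub (fun st' h' => hc st' (List.mem_cons_of_mem _ h'))
    refine ⟨(he, d) :: q', by rw [List.map_cons, ← hst]; rfl, ?_⟩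
    refine ditrail_cons_intro (Sum.inr.inj hsrc) hq' ?_ ?_
    · intro st' h'
      have := hsig (embH st') (Option.mem_def.mpr (head?_map_embH (Option.mem_def.mp h')))
      rw [hst, embH_tsign, embH_ssign] at this
      exact this
    · intro hmem
      apply hne
      erw [fst_map_embH]
      exact List.mem_map_of_mem hmem

lemma mapG :
    ∀ (q' : List G.Step) (x y : VG), G.IsDitrail q' x y → x ≠ s →
      (∀ st ∈ q', G.tgt st ≠ s) →
      (BG.glue G H s f1 f2).IsDitrail (q'.map embG) (Sum.inl x) (Sum.inl y) := by
  intro q'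
  induction q' with
  | nil =>
    intro x y h _ _
    have hxy : x = y := h.2.2.2.2 rfl
    subst hxy
    exact ditrail_nil _
  | cons st q' ih =>
    intro x y h hx hts
    obtain ⟨hsrc, hsub, hsig, hne⟩ := ditrail_cons_elim h
    have hts0 : G.tgt st ≠ s := hts st (List.mem_cons_self)
    erw [List.map_cons]
    refine ditrail_cons_intro (x := Sum.inl x) (by rw [embG_src st (hsrc ▸ hx), hsrc]) ?_ ?_ ?_
    · rw [embG_tgt st hts0]
      exact ih (G.tgt st) y hsub hts0 (fun st' h' => hts st' (List.mem_cons_of_mem _ h'))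
    · intro st' h'
      erw [List.head?_map] at h'
      obtain ⟨b, hb, rfl⟩ := Option.mem_map.mp h'
      rw [embG_tsign, embG_ssign]
      exact hsig b hb
    · intro hmem
      erw [fst_map_embG] at hmem
      obtain ⟨a, ha, ha2⟩ := List.mem_map.mp hmem
      have : a = st.1 := Sum.inl.inj ha2
      subst this
      exact hne ha

lemma mapH :
    ∀ (q' : List H.Step) (x y : VH), H.IsDitrail q' x y →
      (BG.glue G H s f1 f2).IsDitrail (q'.map embH) (Sum.inr x) (Sum.inr y) := by
  intro q'
  induction q' with
  | nil =>
    intro x y h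
    have hxy : x = y := h.2.2.2.2 rfl
    subst hxy
    exact ditrail_nil _
  | cons st q' ih =>
    intro x y h
    obtain ⟨hsrc, hsub, hsig, hne⟩ := ditrail_cons_elim h
    erw [List.map_cons]
    refine ditrail_cons_intro (x := Sum.inr x) (by rw [embH_src, hsrc]) ?_ ?_ ?_
    · rw [embH_tgt]
      exact ih (H.tgt st) y hsub
    · intro st' h'
      erw [List.head?_map] at h'
      obtain ⟨b, hb, rfl⟩ := Option.mem_map.mp h'
      rw [embH_tsign, embH_ssign]
      exact hsig b hb
    · intro hmem
      erw [fst_map_embH] at hmem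
      obtain ⟨a, ha, ha2⟩ := List.mem_map.mp hmem
      have : a = st.1 := Sum.inr.inj ha2
      subst this
      exact hne ha

end GlueTrailMaps
section ReachMk

variable {V : Type} {G : BG V}

lemma reach_nil (G : BG V) (b : Bool) (x : V) : G.Reach (!b) b x x := by
  refine ⟨[], ditrail_nil x, ?_, Set.notMem_empty x, ?_, rfl, rfl⟩ <;>
    · intro st h; cases h

lemma reach_mk {p : List G.Step} {x y : V} {a b : Bool} (h : G.IsDitrail p x y)
    (hh : (p.head?.map G.ssign).getD (!b) = a) (hl : (p.getLast?.map G.tsign).getD b = b) :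
    G.Reach a b x y :=
  ⟨p, h, fun _ _ => trivial, Set.notMem_empty x, fun _ _ => Set.notMem_empty _, hh, hl⟩

lemma reachS_mk {p : List G.Step} {x y : V} {st : G.Step} (h : G.IsDitrail p x y)
    (hh : p.head? = some st) : G.ReachS (G.ssign st) x y := by
  refine ⟨(p.getLast?.map G.tsign).getD true, reach_mk h (by rw [hh]; rfl) ?_⟩
  cases hq : p.getLast? <;> simp [hq]

lemma ditrail_single {st : G.Step} {x y : V} (h1 : G.src st = x) (h2 : G.tgt st = y) :
    G.IsDitrail [st] x y := by
  refine ditrail_cons_intro h1 (h2 ▸ ditrail_nil _) ?_ ?_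
  · intro st' h'; cases h'
  · intro h'; cases h'

end ReachMk

section Core

variable {VG VH : Type} {G : BG VG} {H : BG VH} {s : VG} {f1 f2 : G.E → VH}

lemma core {p : List (BG.glue G H s f1 f2).Step} {x : VG} {z : VH} (hx : x ≠ s)
    (h : (BG.glue G H s f1 f2).IsDitrail p (Sum.inl x) (Sum.inr z))
    {st0 : (BG.glue G H s f1 f2).Step} (hh : p.head? = some st0) :
    G.ReachS ((BG.glue G H s f1 f2).ssign st0) x s := by
  set c : (BG.glue G H s f1 f2).Step → Bool :=
    fun st => ((BG.glue G H s f1 f2).tgt st).isLeft with hcdef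
  have hsplit : p = p.takeWhile c ++ p.dropWhile c := (List.takeWhile_append_dropWhile ..).symm
  cases hD : p.dropWhile c with
  | nil =>
    exfalso
    rw [hD, List.append_nil] at hsplit
    have hpne : p ≠ [] := by intro h0; rw [h0] at hh; cases hh
    obtain ⟨a, ha⟩ : ∃ a, p.getLast? = some a := by
      cases hq : p.getLast? with
      | none => exact absurd (List.getLast?_eq_none_iff.mp hq) hpne
      | some a => exact ⟨a, rfl⟩
    have h1 : (BG.glue G H s f1 f2).tgt a = Sum.inr z := h.2.2.2.1 a ha
    have h2 : c a = true := List.mem_takeWhile_imp (hsplit ▸ mem_of_getLast? ha)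
    have h2' : ((BG.glue G H s f1 f2).tgt a).isLeft = true := h2
    rw [h1, Sum.isLeft_inr] at h2'
    cases h2'
  | cons st1 D2 =>
    have hc1 : c st1 = false := dropWhile_head_false hD
    set T := p.takeWhile c with hTdef
    rw [hD] at hsplit
    rw [hsplit] at h hh
    obtain ⟨v, dT, dD, hj, hv, hv0, hdisj⟩ := ditrail_append_elim h
    obtain ⟨u, hu, hus, hxu⟩ : ∃ u : VG, v = Sum.inl u ∧ u ≠ s ∧ (T = [] → u = x) := by
      cases hT : T with
      | nil => exact ⟨x, hv0 hT, hx, fun _ => rfl⟩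
      | cons a T' =>
        obtain ⟨b, hb⟩ : ∃ b, T.getLast? = some b := by
          rw [hT]
          cases hq : (a :: T').getLast? with
          | none => exact absurd (List.getLast?_eq_none_iff.mp hq) (by simp)
          | some b => exact ⟨b, rfl⟩
        have hcb : c b = true := List.mem_takeWhile_imp (hTdef ▸ mem_of_getLast? hb)
        have hcb' : ((BG.glue G H s f1 f2).tgt b).isLeft = true := hcb
        obtain ⟨u, hu⟩ := Sum.isLeft_iff.mp hcb'
        obtain ⟨e, _, heq, hne⟩ := step_tgt_inl hu
        refine ⟨u, by rw [hv b hb, hu], by rwa [heq] at hne, ?_⟩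
        intro h0; exact absurd h0 (List.cons_ne_nil a T')
    subst hu
    obtain ⟨hsrc1, hsubD, hsig1, hne1⟩ := ditrail_cons_elim dD
    obtain ⟨e1, hst1, hsx1, hss1⟩ := step_src_inl hsrc1
    obtain ⟨w, hw⟩ : ∃ w, (BG.glue G H s f1 f2).tgt st1 = Sum.inr w := by
      have hc1' : ((BG.glue G H s f1 f2).tgt st1).isLeft = false := hc1
      cases htg : (BG.glue G H s f1 f2).tgt st1 with
      | inl u' => rw [htg, Sum.isLeft_inl] at hc1'; cases hc1'
      | inr w => exact ⟨w, rfl⟩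
    have hts1 : G.tgt (e1, st1.2) = s := by
      rw [hst1] at hw
      exact step_tgt_inr_of_inl hw
    have hcondT : ∀ st ∈ T, ∃ z' : VG, (BG.glue G H s f1 f2).tgt st = Sum.inl z' := by
      intro st hst
      have h0 : c st = true := List.mem_takeWhile_imp (hTdef ▸ hst)
      have h0' : ((BG.glue G H s f1 f2).tgt st).isLeft = true := h0
      exact Sum.isLeft_iff.mp h0'
    obtain ⟨q', hTq, hq'dit, -⟩ := demapG T x u dT hcondT
    have hQ2 : G.IsDitrail [(e1, st1.2)] u s := ditrail_single hsx1 hts1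
    have hQ : G.IsDitrail (q' ++ [(e1, st1.2)]) x s := by
      refine ditrail_append hq'dit hQ2 ?_ ?_
      · intro a ha b hb
        have hb' : b = (e1, st1.2) := List.mem_singleton.mp hb
        subst hb'
        have hmemT : embG a ∈ T := by rw [hTq]; exact List.mem_map_of_mem ha
        have hd := hdisj (embG a) hmemT st1 List.mem_cons_self
        intro hab
        apply hd
        rw [hst1]
        exact congrArg Sum.inl hab
      · intro a b hga hgb
        have hb' : b = (e1, st1.2) := by
          rw [List.head?_cons] at hgb
          exact (Option.some.inj hgb).symm
        subst hb'
        have hTlast : T.getLast? = some (embG a) := by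
          erw [hTq, List.getLast?_map, hga]; rfl
        have := hj (embG a) st1 hTlast rfl
        rw [embG_tsign, hst1, embG_ssign] at this
        exact this
    cases hq'n : q' with
    | nil =>
      have hTnil : T = [] := by rw [hTq, hq'n]; rfl
      rw [hTnil, List.nil_append, List.head?_cons] at hh
      have hst0 : st0 = st1 := (Option.some.inj hh).symm
      have hr := reachS_mk hQ (st := (e1, st1.2)) (by rw [hq'n]; rfl)
      rw [hst0, hst1, embG_ssign]
      exact hr
    | cons a q'' =>
      have hThead : T.head? = some (embG a) := by rw [hTq, hq'n]; rfl
      have hst0 : st0 = embG a := by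
        cases hT : T with
        | nil => rw [hT] at hThead; cases hThead
        | cons b T' =>
          rw [hT, List.cons_append, List.head?_cons] at hh
          rw [hT, List.head?_cons] at hThead
          rw [← Option.some.inj hh, Option.some.inj hThead]
      have hr := reachS_mk hQ (st := a) (by rw [hq'n]; rfl)
      rw [hst0, embG_ssign]
      exact hr
end Core
section Transfer

variable {VG VH : Type} {G : BG VG} {H : BG VH} {s : VG} {f1 f2 : G.E → VH}

lemma getD_head_embH (q : List H.Step) (f : Bool) :
    ((q.map (embH (E := G.E))).head?.map (BG.glue G H s f1 f2).ssign).getD f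
      = (q.head?.map H.ssign).getD f := by
  cases q with
  | nil => rfl
  | cons a l => exact embH_ssign a

lemma getD_last_embH (q : List H.Step) (f : Bool) :
    ((q.map (embH (E := G.E))).getLast?.map (BG.glue G H s f1 f2).tsign).getD f
      = (q.getLast?.map H.tsign).getD f := by
  rw [List.getLast?_map]
  cases hq : q.getLast? with
  | none => rfl
  | some b => exact embH_tsign b

lemma getD_head_embG (q : List G.Step) (f : Bool) :
    ((q.map (embG (F := H.E))).head?.map (BG.glue G H s f1 f2).ssign).getD f
      = (q.head?.map G.ssign).getD f := by
  cases q with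
  | nil => rfl
  | cons a l => exact embG_ssign a

end Transfer
theorem stmt14 {VG VH : Type} (G : BG VG) (H : BG VH) (α : Bool) (s : VG) (r : VH)
    (hG : G.IsSemiradial α s) (hsharp : G.SharpAt α s)
    (hH : H.IsRadial α r)
    (S : Set VH) (hS : ∀ v ∈ S, H.StrongVtx α r v)
    (f1 f2 : G.E → VH) (hf1 : ∀ e, f1 e ∈ S) (hf2 : ∀ e, f2 e ∈ S) :
    ∀ β : Bool,
      (∀ x : VG, x ≠ s →
        ((BG.glue G H s f1 f2).Reach β (!α) (Sum.inl x) (Sum.inr r) ↔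
          G.ReachS β x s)) ∧
      (∀ x : VH,
        ((BG.glue G H s f1 f2).Reach β (!α) (Sum.inr x) (Sum.inr r) ↔
          H.Reach β (!α) x r)) := by
  intro β
  have noLoop : ∀ e : G.E, ¬(G.fst e = s ∧ G.snd e = s) := by
    rintro e ⟨h1, h2⟩
    exact (hsharp s ⟨e, Or.inl ⟨h1, h2⟩⟩).2 ⟨α, reach_nil G α s⟩
  refine ⟨fun x hx => ⟨?_, ?_⟩, fun x => ⟨?_, ?_⟩⟩
  · -- (i) ⇒
    rintro ⟨p, hdit, -, -, -, hhead, -⟩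
    cases hp : p with
    | nil =>
      rw [hp] at hdit
      exact absurd (hdit.2.2.2.2 rfl) (by simp)
    | cons st0 p2 =>
      rw [hp] at hdit hhead
      have hr := core hx hdit (st0 := st0) rfl
      rwa [show (BG.glue G H s f1 f2).ssign st0 = β by simpa using hhead] at hr
  · -- (i) ⇐
    rintro ⟨β2, p, hdit, -, -, -, hhead, -⟩
    classical
    set c2 : G.Step → Bool := fun st => decide (G.tgt st ≠ s) with hc2
    have hsplit : p = p.takeWhile c2 ++ p.dropWhile c2 := (List.takeWhile_append_dropWhile ..).symm
    cases hD : p.dropWhile c2 with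
    | nil =>
      exfalso
      rw [hD, List.append_nil] at hsplit
      have hpne : p ≠ [] := fun h0 => hx (by rw [h0] at hdit; exact hdit.2.2.2.2 rfl)
      obtain ⟨a, ha⟩ : ∃ a, p.getLast? = some a := by
        cases hq : p.getLast? with
        | none => exact absurd (List.getLast?_eq_none_iff.mp hq) hpne
        | some a => exact ⟨a, rfl⟩
      have h1 : G.tgt a = s := hdit.2.2.2.1 a ha
      have h2 : c2 a = true := List.mem_takeWhile_imp (hsplit ▸ mem_of_getLast? ha)
      have h2' : decide (G.tgt a ≠ s) = true := h2
      exact (of_decide_eq_true h2') h1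
    | cons st1 D2 =>
      have hc1 : c2 st1 = false := dropWhile_head_false hD
      have hts1 : G.tgt st1 = s := by
        have hc1' : decide (G.tgt st1 ≠ s) = false := hc1
        exact not_not.mp (of_decide_eq_false hc1')
      set T2 := p.takeWhile c2 with hT2
      rw [hD] at hsplit
      rw [hsplit] at hdit hhead
      obtain ⟨v, dT2, dD, hj, hv, hv0, hdisj⟩ := ditrail_append_elim hdit
      obtain ⟨hsrc1, hsubD, -, -⟩ := ditrail_cons_elim dD
      have hTts : ∀ st ∈ T2, G.tgt st ≠ s := by
        intro st hst
        have h0 : c2 st = true := List.mem_takeWhile_imp (hT2 ▸ hst)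
        exact of_decide_eq_true h0
      have hvs : v ≠ s := by
        cases hT : T2 with
        | nil => rw [hv0 hT]; exact hx
        | cons a T' =>
          obtain ⟨b, hb⟩ : ∃ b, T2.getLast? = some b := by
            rw [hT]
            cases hq : (a :: T').getLast? with
            | none => exact absurd (List.getLast?_eq_none_iff.mp hq) (by simp)
            | some b => exact ⟨b, rfl⟩
          rw [hv b hb]
          exact hTts b (mem_of_getLast? hb)
      have dmap : (BG.glue G H s f1 f2).IsDitrail (T2.map embG) (Sum.inl x) (Sum.inl v) :=
        mapG T2 x v dT2 hx hTts
      rcases st1 with ⟨e1, d1⟩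
      have hsv : G.src (e1, d1) = v := hsrc1
      have hsns : G.src (e1, d1) ≠ s := by rw [hsv]; exact hvs
      have srcg : (BG.glue G H s f1 f2).src (embG (e1, d1)) = Sum.inl v := by
        rw [embG_src _ hsns, hsv]
      have tgtg : (BG.glue G H s f1 f2).tgt (embG (e1, d1))
          = Sum.inr (if d1 then f2 e1 else f1 e1) := embG_tgt_s (e1, d1) hts1
      have hvS : (if d1 then f2 e1 else f1 e1) ∈ S := by
        cases d1
        · simpa using hf1 e1
        · simpa using hf2 e1
      obtain ⟨hSa, hSb⟩ := hS _ hvS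
      have hR : H.Reach (!(G.tsign (e1, d1))) (!α) (if d1 then f2 e1 else f1 e1) r := by
        by_cases hτ : G.tsign (e1, d1) = α
        · rw [hτ]; exact hSb
        · rw [Bool.eq_not_iff.mpr hτ, Bool.not_not]; exact hSa
      obtain ⟨Rl, hRdit, -, -, -, hRhead, hRlast⟩ := hR
      have dR : (BG.glue G H s f1 f2).IsDitrail (Rl.map embH)
          (Sum.inr (if d1 then f2 e1 else f1 e1)) (Sum.inr r) := mapH Rl _ r hRdit
      have dmid : (BG.glue G H s f1 f2).IsDitrail (embG (e1, d1) :: Rl.map embH)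
          (Sum.inl v) (Sum.inr r) := by
        refine ditrail_cons_intro srcg ?_ ?_ ?_
        · rw [tgtg]; exact dR
        · intro st' h'
          erw [List.head?_map] at h'
          obtain ⟨b, hb, rfl⟩ := Option.mem_map.mp h'
          rw [embG_tsign, embH_ssign]
          have hsb : H.ssign b = !(G.tsign (e1, d1)) := by
            have hb' : Rl.head? = some b := Option.mem_def.mp hb
            simpa [hb'] using hRhead
          rw [hsb, Bool.not_not]
        · intro hmem
          erw [fst_map_embH] at hmem
          obtain ⟨a, -, ha2⟩ := List.mem_map.mp hmem
          cases ha2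
      have dP : (BG.glue G H s f1 f2).IsDitrail
          (T2.map embG ++ (embG (e1, d1) :: Rl.map embH)) (Sum.inl x) (Sum.inr r) := by
        refine ditrail_append dmap dmid ?_ ?_
        · intro a ha b hb
          obtain ⟨a', ha', rfl⟩ := List.mem_map.mp ha
          rcases List.mem_cons.mp hb with rfl | hb'
          · intro hab
            exact hdisj a' ha' (e1, d1) List.mem_cons_self (Sum.inl.inj hab)
          · obtain ⟨b', -, rfl⟩ := List.mem_map.mp hb'
            intro hab; cases hab
        · intro a b hga hgb
          erw [List.head?_cons] at hgb
          obtain rfl := (Option.some.inj hgb).symm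
          erw [List.getLast?_map] at hga
          obtain ⟨a', ha', rfl⟩ := Option.mem_map.mp hga
          rw [embG_tsign, embG_ssign]
          exact hj a' (e1, d1) (Option.mem_def.mp ha') rfl
      refine reach_mk dP ?_ ?_
      · cases hT : T2 with
        | nil =>
          rw [hT] at hhead
          exact (embG_ssign (e1, d1)).trans (by simpa using hhead)
        | cons a T' =>
          rw [hT] at hhead
          exact (embG_ssign a).trans (by simpa using hhead)
      · cases hR0 : Rl with
        | nil =>
          have hατ : G.tsign (e1, d1) = !α := by
            rw [hR0] at hRhead
            simpa using hRhead.symm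
          have hmidl : (embG (e1, d1) :: Rl.map embH).getLast? = some (embG (e1, d1)) := by
            rw [hR0]; rfl
          have hPl := List.mem_getLast?_append_of_mem_getLast?
            (l₁ := T2.map embG) (Option.mem_def.mpr hmidl)
          rw [hR0] at hPl
          erw [Option.mem_def.mp hPl]
          refine (embG_tsign (e1, d1)).trans ?_
          exact hατ
        | cons b R' =>
          obtain ⟨lb, hlb⟩ : ∃ lb, Rl.getLast? = some lb := by
            rw [hR0]
            cases hq : (b :: R').getLast? with
            | none => exact absurd (List.getLast?_eq_none_iff.mp hq) (by simp)
            | some lb => exact ⟨lb, rfl⟩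
          have hlbs : H.tsign lb = !α := by simpa [hlb] using hRlast
          have hmidl : (embG (e1, d1) :: Rl.map embH).getLast? = some (embH lb) := by
            rw [hR0, List.map_cons, List.getLast?_cons_cons, ← List.map_cons, ← hR0,
              List.getLast?_map, hlb]
            rfl
          have hPl := List.mem_getLast?_append_of_mem_getLast?
            (l₁ := T2.map embG) (Option.mem_def.mpr hmidl)
          rw [hR0] at hPl
          erw [Option.mem_def.mp hPl]
          refine (embH_tsign lb).trans ?_
          exact hlbs

  · -- (ii) ⇒
    rintro ⟨p, hdit, -, -, -, hhead, hlast⟩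
    set c3 : (BG.glue G H s f1 f2).Step → Bool := fun st => st.1.isRight with hc3
    have hsplit : p = p.takeWhile c3 ++ p.dropWhile c3 :=
      (List.takeWhile_append_dropWhile ..).symm
    cases hD : p.dropWhile c3 with
    | nil =>
      rw [hD, List.append_nil] at hsplit
      have hcond : ∀ st ∈ p, ∃ he : H.E, st.1 = Sum.inr he := by
        intro st hst
        have h0 : c3 st = true := List.mem_takeWhile_imp (hsplit ▸ hst)
        have h0' : (st.1).isRight = true := h0
        exact Sum.isRight_iff.mp h0'
      obtain ⟨q', hpq, hq'⟩ := demapH p x r hdit hcond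
      rw [hpq] at hhead hlast
      refine reach_mk hq' ?_ ?_
      · erw [getD_head_embH] at hhead; exact hhead
      · erw [getD_last_embH] at hlast; exact hlast
    | cons st1 D2 =>
      exfalso
      have hc1 : c3 st1 = false := dropWhile_head_false hD
      set T3 := p.takeWhile c3 with hT3
      rw [hD] at hsplit
      rw [hsplit] at hdit
      obtain ⟨v, dT, dD, hj, hv, hv0, -⟩ := ditrail_append_elim hdit
      obtain ⟨w, hw⟩ : ∃ w : VH, v = Sum.inr w := by
        cases hT : T3 with
        | nil => exact ⟨x, hv0 hT⟩
        | cons a T' =>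
          obtain ⟨b, hb⟩ : ∃ b, T3.getLast? = some b := by
            rw [hT]
            cases hq : (a :: T').getLast? with
            | none => exact absurd (List.getLast?_eq_none_iff.mp hq) (by simp)
            | some b => exact ⟨b, rfl⟩
          have h0 : c3 b = true := List.mem_takeWhile_imp (hT3 ▸ mem_of_getLast? hb)
          have h0' : (b.1).isRight = true := h0
          obtain ⟨he, hbe⟩ := Sum.isRight_iff.mp h0'
          rcases b with ⟨bes, bd⟩
          have hbes : bes = Sum.inr he := hbe
          subst hbes
          refine ⟨H.tgt (he, bd), ?_⟩
          rw [hv _ hb]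
          exact embH_tgt (he, bd)
      subst hw
      obtain ⟨hsrc1, hsubD, hsig1, -⟩ := ditrail_cons_elim dD
      obtain ⟨e1, he1⟩ : ∃ e1 : G.E, st1.1 = Sum.inl e1 := by
        have hc1' : (st1.1).isRight = false := hc1
        cases hst1 : st1.1 with
        | inl e1 => exact ⟨e1, rfl⟩
        | inr he => rw [hst1] at hc1'; cases hc1'
      rcases st1 with ⟨es1, d1⟩
      have hes1 : es1 = Sum.inl e1 := he1
      subst hes1
      have hsrcs : G.src (e1, d1) = s := step_src_inr_of_inl hsrc1
      by_cases hts : G.tgt (e1, d1) = s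
      · apply noLoop e1
        cases d1
        · exact ⟨hts, hsrcs⟩
        · exact ⟨hsrcs, hts⟩
      · have htgt : (BG.glue G H s f1 f2).tgt (Sum.inl e1, d1) = Sum.inl (G.tgt (e1, d1)) :=
          embG_tgt (e1, d1) hts
        have hadj : G.Adj (G.tgt (e1, d1)) s := by
          cases d1
          · exact ⟨e1, Or.inl ⟨rfl, hsrcs⟩⟩
          · exact ⟨e1, Or.inr ⟨hsrcs, rfl⟩⟩
        obtain ⟨-, hneg⟩ := hsharp _ hadj
        have hd1 : G.IsDitrail [(e1, !d1)] (G.tgt (e1, d1)) s :=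
          ditrail_single (rev_src G e1 d1) (by rw [rev_tgt]; exact hsrcs)
        have hreach1 : G.ReachS (G.tsign (e1, d1)) (G.tgt (e1, d1)) s := by
          have := reachS_mk hd1 (st := (e1, !d1)) rfl
          rwa [rev_ssign] at this
        rw [htgt] at hsubD
        cases hD2 : D2 with
        | nil =>
          rw [hD2] at hsubD
          exact absurd (hsubD.2.2.2.2 rfl) (by simp)
        | cons st2 D3 =>
          rw [hD2] at hsubD hsig1
          have hreach2' := core hts hsubD (st0 := st2) rfl
          have hsig2 := hsig1 st2 rfl
          have hsig3 : (BG.glue G H s f1 f2).ssign st2 = !(G.tsign (e1, d1)) := by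
            have h0 : G.tsign (e1, d1) = !((BG.glue G H s f1 f2).ssign st2) := by
              rw [← embG_tsign (e1, d1) (H := H) (s := s) (f1 := f1) (f2 := f2)]
              exact hsig2
            rw [h0, Bool.not_not]
          rw [hsig3] at hreach2'
          by_cases hδ : G.tsign (e1, d1) = !α
          · exact hneg (hδ ▸ hreach1)
          · have hδ' : G.tsign (e1, d1) = α := by simpa using Bool.eq_not_iff.mpr hδ
            exact hneg (by rw [← hδ']; exact hreach2')

  · -- (ii) ⇐
    rintro ⟨q, hdit, -, -, -, hhead, hlast⟩
    refine reach_mk (mapH q x r hdit) ?_ ?_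
    · erw [getD_head_embH]; exact hhead
    · erw [getD_last_embH]; exact hlast
end

section
/- Let α ∈ {+,−}. Let G and H be disjoint bidirected graphs such that G is an α-radial with sublinear root s and H is an α-semiradial with root r. Let S ⊆ V(H) be a set of vertices of H having no (−α)-ditrail to r in H, and let Ĝ := (G;s) ⊕ (H;S). Then for each β ∈ {+,−}: (i) a vertex x ∈ V(G)∖{s} has a β-ditrail to r in Ĝ if and only if x has a (β,−α)-ditrail to s in G; and (ii) a vertex x ∈ V(H) has a β-ditrail to r in Ĝ if and only if it has one in H. -/
namespace BG
variable {V : Type} {G : BG V}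

/-- reversal of a step -/
def rev (st : G.Step) : G.Step := (st.1, !st.2)

@[simp] lemma src_rev (st : G.Step) : G.src (G.rev st) = G.tgt st := by
  rcases st with ⟨e, d⟩; cases d <;> simp [src, tgt, rev]

@[simp] lemma tgt_rev (st : G.Step) : G.tgt (G.rev st) = G.src st := by
  rcases st with ⟨e, d⟩; cases d <;> simp [src, tgt, rev]

@[simp] lemma ssign_rev (st : G.Step) : G.ssign (G.rev st) = G.tsign st := by
  rcases st with ⟨e, d⟩; cases d <;> simp [ssign, tsign, rev]

@[simp] lemma tsign_rev (st : G.Step) : G.tsign (G.rev st) = G.ssign st := by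
  rcases st with ⟨e, d⟩; cases d <;> simp [ssign, tsign, rev]

@[simp] lemma rev_fst (st : G.Step) : (G.rev st).1 = st.1 := rfl

lemma isDitrail_nil (x : V) : G.IsDitrail [] x x := by
  refine ⟨List.nodup_nil, by simp [List.Chain'], by simp, by simp, fun _ => rfl⟩

lemma reachS_rfl (β : Bool) (x : V) : G.ReachS β x x := by
  refine ⟨!β, [], isDitrail_nil x, by simp, by simp, by simp, by simp, by simp⟩

lemma reach_of_ditrail {p : List G.Step} {x y : V} (h : G.IsDitrail p x y)
    (hne : p ≠ []) {β τ : Bool}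
    (hh : G.ssign (p.head hne) = β) (hl : G.tsign (p.getLast hne) = τ) :
    G.Reach β τ x y := by
  refine ⟨p, h, by simp, by simp, by simp, ?_, ?_⟩
  · rw [List.head?_eq_head hne]; simpa using hh
  · rw [List.getLast?_eq_getLast hne]; simpa using hl

lemma reachS_of_ditrail {p : List G.Step} {x y : V} (h : G.IsDitrail p x y)
    (hne : p ≠ []) {β : Bool} (hh : G.ssign (p.head hne) = β) :
    G.ReachS β x y :=
  ⟨_, reach_of_ditrail h hne hh rfl⟩

/-- destructor for `Reach` -/
lemma reach_elim {β τ : Bool} {x y : V} (h : G.Reach β τ x y) :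
    (x = y ∧ β = !τ) ∨ ∃ p, ∃ hne : p ≠ [], G.IsDitrail p x y ∧
      G.ssign (p.head hne) = β ∧ G.tsign (p.getLast hne) = τ := by
  obtain ⟨p, hp, -, -, -, h1, h2⟩ := h
  rcases eq_or_ne p [] with rfl | hne
  · refine Or.inl ⟨hp.2.2.2.2 rfl, ?_⟩
    simp only [List.head?_nil, Option.map_none, Option.getD_none] at h1
    exact h1.symm
  · refine Or.inr ⟨p, hne, hp, ?_, ?_⟩
    · rwa [List.head?_eq_head hne, Option.map_some, Option.getD_some] at h1
    · rwa [List.getLast?_eq_getLast hne, Option.map_some, Option.getD_some] at h2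

end BG
namespace BG
variable {V : Type} {G : BG V}

lemma head?_append_left {α : Type*} {p q : List α} (hp : p ≠ []) :
    (p ++ q).head? = p.head? := by
  obtain ⟨a, p', rfl⟩ := List.exists_cons_of_ne_nil hp
  simp

lemma getLast?_append_right {α : Type*} {p q : List α} (hq : q ≠ []) :
    (p ++ q).getLast? = q.getLast? := by
  rw [List.getLast?_append, List.getLast?_eq_getLast hq]; rfl

lemma getLast?_map {α β : Type*} (f : α → β) (p : List α) :
    (p.map f).getLast? = p.getLast?.map f := by
  rw [← List.head?_reverse, ← List.map_reverse, List.head?_map, List.head?_reverse]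

lemma IsDitrail.append {p q : List G.Step} {x y z : V}
    (hp : G.IsDitrail p x y) (hq : G.IsDitrail q y z)
    (hd : ∀ a ∈ p, ∀ b ∈ q, a.1 ≠ b.1)
    (hsgn : ∀ a b, p.getLast? = some a → q.head? = some b → G.tsign a = !G.ssign b) :
    G.IsDitrail (p ++ q) x z := by
  rcases eq_or_ne p [] with rfl | hp'
  · rcases hp with ⟨-, -, -, -, hxy⟩; rw [hxy rfl]; simpa using hq
  rcases eq_or_ne q [] with rfl | hq'
  · rcases hq with ⟨-, -, -, -, hyz⟩; rw [← hyz rfl]; simpa using hp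
  refine ⟨?_, ?_, ?_, ?_, by simp [hp']⟩
  · rw [List.map_append, List.nodup_append']
    refine ⟨hp.1, hq.1, fun e he he' => ?_⟩
    simp only [List.mem_map] at he he'
    obtain ⟨a, ha, rfl⟩ := he; obtain ⟨b, hb, hab⟩ := he'
    exact hd a ha b hb hab.symm
  · refine List.isChain_append.mpr ⟨hp.2.1, hq.2.1, fun a ha b hb => ?_⟩
    rw [Option.mem_def] at ha hb
    exact ⟨(hp.2.2.2.1 a ha).trans (hq.2.2.1 b hb).symm, hsgn a b ha hb⟩
  · intro st hst
    rw [head?_append_left hp'] at hst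
    exact hp.2.2.1 st hst
  · intro st hst
    rw [getLast?_append_right hq'] at hst
    exact hq.2.2.2.1 st hst

lemma IsDitrail.split_left {p q : List G.Step} {x y : V}
    (h : G.IsDitrail (p ++ q) x y) (hp : p ≠ []) :
    G.IsDitrail p x (G.tgt (p.getLast hp)) := by
  refine ⟨?_, ?_, ?_, ?_, fun h' => absurd h' hp⟩
  · have h1 := h.1; rw [List.map_append] at h1; exact (List.nodup_append'.mp h1).1
  · exact (List.isChain_append.mp h.2.1).1
  · intro st hst
    exact h.2.2.1 st (by rwa [head?_append_left hp])
  · intro st hst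
    rw [List.getLast?_eq_getLast hp] at hst
    cases hst; rfl

lemma IsDitrail.split_right {p q : List G.Step} {x y : V}
    (h : G.IsDitrail (p ++ q) x y) (hq : q ≠ []) :
    G.IsDitrail q (G.src (q.head hq)) y := by
  refine ⟨?_, ?_, ?_, ?_, fun h' => absurd h' hq⟩
  · have h1 := h.1; rw [List.map_append] at h1; exact (List.nodup_append'.mp h1).2.1
  · exact (List.isChain_append.mp h.2.1).2.1
  · intro st hst
    rw [List.head?_eq_head hq] at hst
    cases hst; rfl
  · intro st hst
    exact h.2.2.2.1 st (by rwa [getLast?_append_right hq])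

lemma IsDitrail.split_junction {p q : List G.Step} {x y : V}
    (h : G.IsDitrail (p ++ q) x y) (hp : p ≠ []) (hq : q ≠ []) :
    G.tgt (p.getLast hp) = G.src (q.head hq) ∧
      G.tsign (p.getLast hp) = !G.ssign (q.head hq) := by
  have := (List.isChain_append.mp h.2.1).2.2 (p.getLast hp)
    (by rw [List.getLast?_eq_getLast hp]; rfl) (q.head hq)
    (by rw [List.head?_eq_head hq]; rfl)
  exact this

lemma IsDitrail.reverse {p : List G.Step} {x y : V} (h : G.IsDitrail p x y) :
    G.IsDitrail ((p.map G.rev).reverse) y x := by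
  refine ⟨?_, ?_, ?_, ?_, ?_⟩
  · have : ((p.map G.rev).reverse).map Prod.fst = ((p.map Prod.fst)).reverse := by
      rw [← List.map_reverse, List.map_map]
      rw [← List.map_reverse]; congr 1
    rw [this, List.nodup_reverse]; exact h.1
  · unfold List.Chain'; rw [List.isChain_reverse, List.isChain_map]
    refine List.IsChain.imp ?_ h.2.1
    rintro a b ⟨h1, h2⟩
    constructor
    · show G.tgt (G.rev b) = G.src (G.rev a)
      rw [tgt_rev, src_rev]; exact h1.symm
    · show G.tsign (G.rev b) = !G.ssign (G.rev a)
      rw [tsign_rev, ssign_rev, h2, Bool.not_not]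
  · intro st hst
    rw [List.head?_reverse, getLast?_map] at hst
    obtain ⟨st', hst', rfl⟩ := Option.map_eq_some_iff.mp hst
    rw [src_rev]; exact h.2.2.2.1 st' hst'
  · intro st hst
    rw [List.getLast?_reverse, List.head?_map] at hst
    obtain ⟨st', hst', rfl⟩ := Option.map_eq_some_iff.mp hst
    rw [tgt_rev]; exact h.2.2.1 st' hst'
  · intro h'
    have : p = [] := by simpa using h'
    exact (h.2.2.2.2 this).symm

/-- decompose a list at the first element satisfying `P` -/
lemma exists_first_split {α : Type*} (P : α → Prop) {l : List α}
    (h : ∃ a ∈ l, P a) : ∃ l₁ a l₂, l = l₁ ++ a :: l₂ ∧ P a ∧ ∀ b ∈ l₁, ¬ P b := by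
  classical
  induction l with
  | nil => simp at h
  | cons c t ih =>
    by_cases hc : P c
    · exact ⟨[], c, t, by simp, hc, by simp⟩
    · obtain ⟨a, ha, hPa⟩ := h
      rcases List.mem_cons.mp ha with rfl | ha'
      · exact absurd hPa hc
      · obtain ⟨l₁, a', l₂, rfl, h1, h2⟩ := ih ⟨a, ha', hPa⟩
        exact ⟨c :: l₁, a', l₂, by simp, h1, by
          intro b hb; rcases List.mem_cons.mp hb with rfl | hb'
          · exact hc
          · exact h2 b hb'⟩

/-- decompose a list at the last element satisfying `P` -/
lemma exists_last_split {α : Type*} (P : α → Prop) {l : List α}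
    (h : ∃ a ∈ l, P a) : ∃ l₁ a l₂, l = l₁ ++ a :: l₂ ∧ P a ∧ ∀ b ∈ l₂, ¬ P b := by
  obtain ⟨a, ha, hPa⟩ := h
  obtain ⟨l₁, a', l₂, hsplit, h1, h2⟩ := exists_first_split P (l := l.reverse)
    ⟨a, by simpa using ha, hPa⟩
  refine ⟨l₂.reverse, a', l₁.reverse, ?_, h1, by simpa using h2⟩
  have : l.reverse.reverse = (l₁ ++ a' :: l₂).reverse := by rw [hsplit]
  simpa using this

end BG
namespace BG
variable {V : Type} {G : BG V}

lemma reach_of_ditrail' {p : List G.Step} {x y : V} (h : G.IsDitrail p x y)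
    (hne : p ≠ []) {β τ : Bool}
    (hh : ∀ st, p.head? = some st → G.ssign st = β)
    (hl : ∀ st, p.getLast? = some st → G.tsign st = τ) :
    G.Reach β τ x y :=
  reach_of_ditrail h hne (hh _ (List.head?_eq_head hne))
    (hl _ (List.getLast?_eq_getLast hne))

lemma reachS_of_ditrail' {p : List G.Step} {x y : V} (h : G.IsDitrail p x y)
    (hne : p ≠ []) {β : Bool}
    (hh : ∀ st, p.head? = some st → G.ssign st = β) :
    G.ReachS β x y :=
  ⟨_, reach_of_ditrail' h hne hh (fun st hst => by
    rw [List.getLast?_eq_getLast hne] at hst; cases hst; rfl)⟩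

lemma getLast?_concat {α : Type*} (l : List α) (a : α) :
    (l ++ [a]).getLast? = some a := by
  rw [getLast?_append_right (by simp)]; rfl

lemma bool_eq_not_of_ne {a b : Bool} (h : a ≠ b) : a = !b := by
  cases a <;> cases b <;> simp_all

/-- The key composition lemma ("Lemma L"): if `x` has a ditrail to `u ∈ S` ending with
sign `!α`, and `u` has no `!α`-ditrail to `r`, then `x` reaches `r` with the same
start sign, using semiradiality. -/
lemma lemma_L {α : Bool} {r : V} (hH : G.IsSemiradial α r) {S : Set V}
    (hS : ∀ v ∈ S, ¬ G.ReachS (!α) v r) {u : V} (hu : u ∈ S)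
    {D : List G.Step} {x : V} (hD : G.IsDitrail D x u) (hne : D ≠ [])
    {β : Bool} (hh : ∀ st, D.head? = some st → G.ssign st = β)
    (hl : ∀ st, D.getLast? = some st → G.tsign st = !α) :
    G.ReachS β x r := by
  have hur : u ≠ r := by rintro rfl; exact hS u hu (reachS_rfl _ _)
  obtain ⟨βq, hQr⟩ := hH u
  rcases reach_elim hQr with ⟨rfl, -⟩ | ⟨pQ, hQne, hQ, hQh, -⟩
  · exact absurd rfl hur
  by_cases hshare : ∃ st ∈ pQ, ∃ st' ∈ D, st'.1 = st.1
  · -- there is a shared edge; take the last one along pQ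
    obtain ⟨Q₁, qj, Q₂, hQsplit, ⟨di, hdiD, hdiq⟩, hQ₂⟩ :=
      exists_last_split (fun st : G.Step => ∃ st' ∈ D, st'.1 = st.1) hshare
    obtain ⟨D₁, D₂, hDsplit⟩ := List.append_of_mem hdiD
    have hDassoc : D = (D₁ ++ [di]) ++ D₂ := by rw [hDsplit]; simp
    have hlastD₁ : ∀ h', (D₁ ++ [di]).getLast h' = di := by
      intro h'
      have := getLast?_concat D₁ di
      rw [List.getLast?_eq_getLast h'] at this
      exact Option.some_injective _ this
    have hmemD : ∀ a ∈ D₁ ++ [di], a ∈ D := by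
      intro a ha; rw [hDassoc]; exact List.mem_append_left _ ha
    have hheadD : D.head? = (D₁ ++ [di]).head? := by
      rw [hDassoc, head?_append_left (by simp)]
    by_cases hdir : di.2 = qj.2
    · -- same direction: splice
      have hdq : di = qj := Prod.ext hdiq hdir
      have hleft : G.IsDitrail (D₁ ++ [di]) x (G.tgt di) := by
        have := (hDassoc ▸ hD).split_left (by simp)
        rwa [hlastD₁] at this
      rcases eq_or_ne Q₂ [] with rfl | hQ₂ne
      · -- qj is the last step of pQ
        have htq : G.tgt qj = r := by
          refine hQ.2.2.2.1 qj ?_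
          rw [hQsplit]; exact getLast?_concat Q₁ qj
        have htd : G.tgt di = r := by rw [hdq]; exact htq
        rw [htd] at hleft
        exact reachS_of_ditrail' hleft (by simp)
          (fun st hst => hh st (by rwa [hheadD]))
      · have hQassoc : pQ = (Q₁ ++ [qj]) ++ Q₂ := by rw [hQsplit]; simp
        have hlastQ₁ : ∀ h', (Q₁ ++ [qj]).getLast h' = qj := by
          intro h'
          have := getLast?_concat Q₁ qj
          rw [List.getLast?_eq_getLast h'] at this
          exact Option.some_injective _ this
        have hright : G.IsDitrail Q₂ (G.src (Q₂.head hQ₂ne)) r :=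
          (hQassoc ▸ hQ).split_right hQ₂ne
        have hjunc := (hQassoc ▸ hQ).split_junction (by simp) hQ₂ne
        rw [hlastQ₁] at hjunc
        have hend : G.tgt di = G.src (Q₂.head hQ₂ne) := by rw [hdq]; exact hjunc.1
        rw [hend] at hleft
        have happ : G.IsDitrail ((D₁ ++ [di]) ++ Q₂) x r := by
          refine hleft.append hright ?_ ?_
          · intro a ha b hb
            have := hQ₂ b hb
            push_neg at this
            exact this a (hmemD a ha)
          · intro a b ha hb
            rw [getLast?_concat] at ha
            cases ha
            rw [List.head?_eq_head hQ₂ne] at hb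
            cases hb
            rw [hdq]; exact hjunc.2
        refine reachS_of_ditrail' happ (by simp) (fun st hst => ?_)
        rw [head?_append_left (by simp), ← hheadD] at hst
        exact hh st hst
    · -- opposite direction: contradiction with `hS u`
      exfalso
      have hrevq : di = G.rev qj := by
        refine Prod.ext hdiq ?_
        exact bool_eq_not_of_ne hdir
      rcases eq_or_ne D₂ [] with rfl | hD₂ne
      · -- di is the last step of D
        have hlast : D.getLast? = some di := by
          rw [hDsplit]; exact getLast?_concat D₁ di
        have htd : G.tgt di = u := hD.2.2.2.1 di hlast
        have hts : G.tsign di = !α := hl di hlast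
        have hQ2assoc : pQ = Q₁ ++ (qj :: Q₂) := hQsplit
        have hW : G.IsDitrail (qj :: Q₂) (G.src ((qj :: Q₂).head (by simp))) r :=
          (hQ2assoc ▸ hQ).split_right (by simp)
        have hsrc : G.src qj = u := by
          have : G.tgt di = G.src qj := by rw [hrevq, tgt_rev]
          rw [← this, htd]
        rw [List.head_cons, hsrc] at hW
        refine hS u hu (reachS_of_ditrail' hW (by simp) (fun st hst => ?_))
        rw [List.head?_cons] at hst
        cases hst
        have : G.ssign qj = G.tsign di := by rw [hrevq, tsign_rev]
        rw [this, hts]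
      · -- general case: reverse the tail of D and prepend to qj :: Q₂
        have hright : G.IsDitrail D₂ (G.src (D₂.head hD₂ne)) u :=
          (hDassoc ▸ hD).split_right hD₂ne
        have hjuncD := (hDassoc ▸ hD).split_junction (by simp) hD₂ne
        rw [hlastD₁] at hjuncD
        have hRD : G.IsDitrail ((D₂.map G.rev).reverse) u (G.src (D₂.head hD₂ne)) :=
          hright.reverse
        have hQ2assoc : pQ = Q₁ ++ (qj :: Q₂) := hQsplit
        have hW : G.IsDitrail (qj :: Q₂) (G.src ((qj :: Q₂).head (by simp))) r :=
          (hQ2assoc ▸ hQ).split_right (by simp)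
        rw [List.head_cons] at hW
        have hsrcq : G.src qj = G.src (D₂.head hD₂ne) := by
          have h1 : G.tgt di = G.src qj := by rw [hrevq, tgt_rev]
          rw [← h1]; exact hjuncD.1
        rw [hsrcq] at hW
        have hRDne : (D₂.map G.rev).reverse ≠ [] := by
          simp [hD₂ne]
        have hRDlast : ((D₂.map G.rev).reverse).getLast? = some (G.rev (D₂.head hD₂ne)) := by
          rw [List.getLast?_reverse, List.head?_map, List.head?_eq_head hD₂ne]; rfl
        have hRDhead : ((D₂.map G.rev).reverse).head? = (D₂.getLast?).map G.rev := by
          rw [List.head?_reverse, getLast?_map]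
        have hdinotD₂ : di.1 ∉ D₂.map Prod.fst := by
          have hnd := hD.1
          rw [hDsplit, List.map_append] at hnd
          have := (List.nodup_append'.mp hnd).2.1
          simp only [List.map_cons, List.nodup_cons] at this
          exact this.1
        have happ : G.IsDitrail ((D₂.map G.rev).reverse ++ (qj :: Q₂)) u r := by
          refine hRD.append hW ?_ ?_
          · intro a ha b hb
            simp only [List.mem_reverse, List.mem_map] at ha
            obtain ⟨a', ha', rfl⟩ := ha
            rcases List.mem_cons.mp hb with rfl | hb'
            · -- b = qj : its edge is di.1 which is not in D₂
              rw [rev_fst]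
              intro hcontr
              apply hdinotD₂
              rw [hdiq, ← hcontr]
              exact List.mem_map_of_mem ha'
            · have := hQ₂ b hb'
              push_neg at this
              rw [rev_fst]
              refine this a' ?_
              rw [hDassoc]
              exact List.mem_append_right _ ha'
          · intro a b ha hb
            rw [hRDlast] at ha
            cases ha
            rw [List.head?_cons] at hb
            cases hb
            rw [tsign_rev]
            -- ⊢ ssign (head D₂) = !ssign qj
            have h1 : G.ssign qj = G.tsign di := by rw [hrevq, tsign_rev]
            rw [h1, hjuncD.2, Bool.not_not]
        refine hS u hu (reachS_of_ditrail' happ (by simp [hD₂ne]) (fun st hst => ?_))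
        rw [head?_append_left hRDne, hRDhead, List.getLast?_eq_getLast hD₂ne] at hst
        cases hst
        rw [ssign_rev]
        -- ⊢ tsign (getLast D₂) = !α
        refine hl _ ?_
        rw [hDassoc, getLast?_append_right hD₂ne, List.getLast?_eq_getLast hD₂ne]
  · -- no shared edge: concatenate
    push_neg at hshare
    have happ : G.IsDitrail (D ++ pQ) x r := by
      refine hD.append hQ ?_ ?_
      · intro a ha b hb h
        exact hshare b hb a ha h
      · intro a b ha hb
        rw [hl a ha]
        rw [List.head?_eq_head hQne] at hb
        cases hb
        rw [show G.ssign (pQ.head hQne) = α from hQh]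
    refine reachS_of_ditrail' happ (by simp [hne]) (fun st hst => ?_)
    rw [head?_append_left hne] at hst
    exact hh st hst

end BG
namespace BG
section Glue
variable {VG VH : Type} (G : BG VG) (H : BG VH) (s : VG) (f1 f2 : G.E → VH)

/-- lift a step of `G` into the gluing sum -/
def liftG (st : G.Step) : (glue G H s f1 f2).Step := (Sum.inl st.1, st.2)
/-- lift a step of `H` into the gluing sum -/
def liftH (st : H.Step) : (glue G H s f1 f2).Step := (Sum.inr st.1, st.2)
/-- project vertices of the gluing sum to `G` -/
def pv (s : VG) : VG ⊕ VH → VG := Sum.elim id (fun _ => s)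

variable {G H s f1 f2}

local notation "Ĝ" => glue G H s f1 f2

@[simp] lemma ssign_liftG (st : G.Step) : (Ĝ).ssign (liftG G H s f1 f2 st) = G.ssign st := by
  rcases st with ⟨e, d⟩; cases d <;> rfl

@[simp] lemma tsign_liftG (st : G.Step) : (Ĝ).tsign (liftG G H s f1 f2 st) = G.tsign st := by
  rcases st with ⟨e, d⟩; cases d <;> rfl

@[simp] lemma ssign_liftH (st : H.Step) : (Ĝ).ssign (liftH G H s f1 f2 st) = H.ssign st := by
  rcases st with ⟨e, d⟩; cases d <;> rfl

@[simp] lemma tsign_liftH (st : H.Step) : (Ĝ).tsign (liftH G H s f1 f2 st) = H.tsign st := by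
  rcases st with ⟨e, d⟩; cases d <;> rfl

@[simp] lemma src_liftH (st : H.Step) : (Ĝ).src (liftH G H s f1 f2 st) = Sum.inr (H.src st) := by
  rcases st with ⟨e, d⟩; cases d <;> rfl

@[simp] lemma tgt_liftH (st : H.Step) : (Ĝ).tgt (liftH G H s f1 f2 st) = Sum.inr (H.tgt st) := by
  rcases st with ⟨e, d⟩; cases d <;> rfl

lemma pv_src_liftG (st : G.Step) : pv (VH := VH) s ((Ĝ).src (liftG G H s f1 f2 st)) = G.src st := by
  rcases st with ⟨e, d⟩
  cases d
  · by_cases h : G.snd e = s <;> simp [src, glue, liftG, pv, h]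
  · by_cases h : G.fst e = s <;> simp [src, glue, liftG, pv, h]

lemma pv_tgt_liftG (st : G.Step) : pv (VH := VH) s ((Ĝ).tgt (liftG G H s f1 f2 st)) = G.tgt st := by
  rcases st with ⟨e, d⟩
  cases d
  · by_cases h : G.fst e = s <;> simp [tgt, glue, liftG, pv, h]
  · by_cases h : G.snd e = s <;> simp [tgt, glue, liftG, pv, h]

lemma src_liftG_of_ne {st : G.Step} (h : G.src st ≠ s) :
    (Ĝ).src (liftG G H s f1 f2 st) = Sum.inl (G.src st) := by
  rcases st with ⟨e, d⟩
  cases d <;> simp [src] at h <;> simp [src, glue, liftG, h]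

lemma tgt_liftG_of_ne {st : G.Step} (h : G.tgt st ≠ s) :
    (Ĝ).tgt (liftG G H s f1 f2 st) = Sum.inl (G.tgt st) := by
  rcases st with ⟨e, d⟩
  cases d <;> simp [tgt] at h <;> simp [tgt, glue, liftG, h]

lemma tgt_liftG_of_eq {st : G.Step} (h : G.tgt st = s) :
    ∃ w, (w = f1 st.1 ∨ w = f2 st.1) ∧ (Ĝ).tgt (liftG G H s f1 f2 st) = Sum.inr w := by
  rcases st with ⟨e, d⟩
  cases d <;> simp [tgt] at h
  · exact ⟨f1 e, Or.inl rfl, by simp [tgt, glue, liftG, h]⟩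
  · exact ⟨f2 e, Or.inr rfl, by simp [tgt, glue, liftG, h]⟩

lemma src_liftG_inr {st : G.Step} {w : VH} (h : (Ĝ).src (liftG G H s f1 f2 st) = Sum.inr w) :
    G.src st = s ∧ (w = f1 st.1 ∨ w = f2 st.1) := by
  rcases st with ⟨e, d⟩
  cases d
  · by_cases h' : G.snd e = s <;> simp [src, glue, liftG, h'] at h <;>
      simp [src, h', h]
  · by_cases h' : G.fst e = s <;> simp [src, glue, liftG, h'] at h <;>
      simp [src, h', h]

lemma tgt_liftG_inr {st : G.Step} {w : VH} (h : (Ĝ).tgt (liftG G H s f1 f2 st) = Sum.inr w) :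
    G.tgt st = s ∧ (w = f1 st.1 ∨ w = f2 st.1) := by
  rcases st with ⟨e, d⟩
  cases d
  · by_cases h' : G.fst e = s <;> simp [tgt, glue, liftG, h'] at h <;>
      simp [tgt, h', h]
  · by_cases h' : G.snd e = s <;> simp [tgt, glue, liftG, h'] at h <;>
      simp [tgt, h', h]

lemma exists_map_liftH {p : List (Ĝ).Step} (h : ∀ st ∈ p, st.1.isRight) :
    ∃ q : List H.Step, p = q.map (liftH G H s f1 f2) := by
  induction p with
  | nil => exact ⟨[], rfl⟩
  | cons a t ih =>
    obtain ⟨q, rfl⟩ := ih (fun st hst => h st (by simp [hst]))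
    obtain ⟨e, he⟩ := Sum.isRight_iff.mp (h a (by simp))
    exact ⟨(e, a.2) :: q, by simp [liftH, ← he]⟩

lemma exists_map_liftG {p : List (Ĝ).Step} (h : ∀ st ∈ p, st.1.isLeft) :
    ∃ q : List G.Step, p = q.map (liftG G H s f1 f2) := by
  induction p with
  | nil => exact ⟨[], rfl⟩
  | cons a t ih =>
    obtain ⟨q, rfl⟩ := ih (fun st hst => h st (by simp [hst]))
    obtain ⟨e, he⟩ := Sum.isLeft_iff.mp (h a (by simp))
    exact ⟨(e, a.2) :: q, by simp [liftG, ← he]⟩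

/-- ditrails of `H` correspond to ditrails of the gluing sum inside the `H`-copy -/
lemma isDitrail_liftH_iff {p : List H.Step} {x y : VH} :
    (Ĝ).IsDitrail (p.map (liftH G H s f1 f2)) (Sum.inr x) (Sum.inr y) ↔ H.IsDitrail p x y := by
  constructor
  · rintro ⟨h1, h2, h3, h4, h5⟩
    refine ⟨?_, ?_, ?_, ?_, ?_⟩
    · rw [List.map_map] at h1
      have : (Prod.fst ∘ liftH G H s f1 f2) = (Sum.inr ∘ Prod.fst) := rfl
      rw [this] at h1; change (List.map ((Sum.inr : _ → G.E ⊕ H.E) ∘ Prod.fst) p).Nodup at h1; rw [← List.map_map] at h1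
      exact (h1.of_map _)
    · unfold List.Chain' at h2; rw [List.isChain_map] at h2
      refine h2.imp ?_
      rintro a b ⟨ha, hb⟩
      rw [src_liftH, tgt_liftH, Sum.inr.injEq] at ha
      rw [ssign_liftH, tsign_liftH] at hb
      exact ⟨ha, hb⟩
    · intro st hst
      have := h3 (liftH G H s f1 f2 st) (by rw [List.head?_map, hst]; rfl)
      rw [src_liftH, Sum.inr.injEq] at this
      exact this
    · intro st hst
      have := h4 (liftH G H s f1 f2 st) (by rw [getLast?_map, hst]; rfl)
      rw [tgt_liftH, Sum.inr.injEq] at this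
      exact this
    · intro h
      have := h5 (by simp [h])
      simpa using this
  · rintro ⟨h1, h2, h3, h4, h5⟩
    refine ⟨?_, ?_, ?_, ?_, ?_⟩
    · rw [List.map_map]
      have : (Prod.fst ∘ liftH G H s f1 f2) = (Sum.inr ∘ Prod.fst) := rfl
      rw [this]; change (List.map ((Sum.inr : _ → G.E ⊕ H.E) ∘ Prod.fst) p).Nodup; rw [← List.map_map]
      exact h1.map Sum.inr_injective
    · unfold List.Chain'; rw [List.isChain_map]
      refine h2.imp ?_
      rintro a b ⟨ha, hb⟩
      refine ⟨?_, ?_⟩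
      · rw [src_liftH, tgt_liftH, ha]
      · rw [ssign_liftH, tsign_liftH, hb]
    · intro st hst
      rw [List.head?_map] at hst
      obtain ⟨st', hst', rfl⟩ := Option.map_eq_some_iff.mp hst
      rw [src_liftH, h3 st' hst']
    · intro st hst
      rw [getLast?_map] at hst
      obtain ⟨st', hst', rfl⟩ := Option.map_eq_some_iff.mp hst
      rw [tgt_liftH, h4 st' hst']
    · intro h
      rw [h5 (by simpa using h)]

/-- projection of an all-`G` ditrail of the gluing sum back to `G` -/
lemma isDitrail_liftG_proj {p : List G.Step} {X Y : VG ⊕ VH}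
    (h : (Ĝ).IsDitrail (p.map (liftG G H s f1 f2)) X Y) :
    G.IsDitrail p (pv (VH := VH) s X) (pv (VH := VH) s Y) := by
  obtain ⟨h1, h2, h3, h4, h5⟩ := h
  refine ⟨?_, ?_, ?_, ?_, ?_⟩
  · rw [List.map_map] at h1
    have : (Prod.fst ∘ liftG G H s f1 f2) = (Sum.inl ∘ Prod.fst) := rfl
    rw [this] at h1; change (List.map ((Sum.inl : _ → G.E ⊕ H.E) ∘ Prod.fst) p).Nodup at h1; rw [← List.map_map] at h1
    exact h1.of_map _
  · unfold List.Chain' at h2; rw [List.isChain_map] at h2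
    refine h2.imp ?_
    rintro a b ⟨ha, hb⟩
    constructor
    · rw [← pv_tgt_liftG (st := a), ← pv_src_liftG (st := b), ha]
    · rwa [ssign_liftG, tsign_liftG] at hb
  · intro st hst
    have := h3 (liftG G H s f1 f2 st) (by rw [List.head?_map, hst]; rfl)
    rw [← this, pv_src_liftG]
  · intro st hst
    have := h4 (liftG G H s f1 f2 st) (by rw [getLast?_map, hst]; rfl)
    rw [← this, pv_tgt_liftG]
  · intro h
    rw [h5 (by simp [h])]

lemma chain'_map_liftG : ∀ {p : List G.Step},
    List.Chain' (fun a b => G.tgt a = G.src b ∧ G.tsign a = !G.ssign b) p →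
    (∀ st ∈ p.dropLast, G.tgt st ≠ s) →
    List.Chain' (fun a b => (Ĝ).tgt a = (Ĝ).src b ∧ (Ĝ).tsign a = !(Ĝ).ssign b)
      (p.map (liftG G H s f1 f2)) := by
  intro p
  induction p with
  | nil => intro _ _; simp [List.Chain']
  | cons a t ih =>
    intro h2 hint
    cases t with
    | nil => simp [List.Chain']
    | cons b t' =>
      have hab := List.isChain_cons_cons.mp h2
      have hta : G.tgt a ≠ s := hint a (by simp)
      simp only [List.map_cons]
      refine List.isChain_cons_cons.mpr ⟨?_, ?_⟩
      · constructor
        · rw [tgt_liftG_of_ne hta, src_liftG_of_ne (by rw [← hab.1.1]; exact hta), hab.1.1]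
        · rw [ssign_liftG, tsign_liftG]; exact hab.1.2
      · have := ih hab.2 (fun st hst => hint st (by
          rcases t' with _ | ⟨c, t''⟩
          · simp at hst
          · simp only [List.dropLast_cons₂, List.mem_cons] at hst ⊢
            exact Or.inr hst))
        simpa [List.Chain'] using this

/-- lifting a ditrail of `G` ending at `s` (and otherwise avoiding `s`) into the gluing sum -/
lemma isDitrail_liftG_lift {p : List G.Step} {x : VG} (h : G.IsDitrail p x s)
    (hne : p ≠ []) (hx : x ≠ s) (hint : ∀ st ∈ p.dropLast, G.tgt st ≠ s) :
    ∃ w, (w = f1 (p.getLast hne).1 ∨ w = f2 (p.getLast hne).1) ∧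
      (Ĝ).IsDitrail (p.map (liftG G H s f1 f2)) (Sum.inl x) (Sum.inr w) := by
  obtain ⟨h1, h2, h3, h4, h5⟩ := h
  have hlast : G.tgt (p.getLast hne) = s :=
    h4 _ (List.getLast?_eq_getLast hne)
  obtain ⟨w, hw, hwt⟩ := tgt_liftG_of_eq (G := G) (H := H) (f1 := f1) (f2 := f2) hlast
  refine ⟨w, hw, ?_, ?_, ?_, ?_, ?_⟩
  · rw [List.map_map]
    have : (Prod.fst ∘ liftG G H s f1 f2) = (Sum.inl ∘ Prod.fst) := rfl
    rw [this]; change (List.map ((Sum.inl : _ → G.E ⊕ H.E) ∘ Prod.fst) p).Nodup; rw [← List.map_map]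
    exact h1.map Sum.inl_injective
  · exact chain'_map_liftG h2 hint
  · intro st hst
    rw [List.head?_map] at hst
    obtain ⟨st', hst', rfl⟩ := Option.map_eq_some_iff.mp hst
    have hsrc : G.src st' = x := h3 st' hst'
    rw [src_liftG_of_ne (by rw [hsrc]; exact hx), hsrc]
  · intro st hst
    rw [getLast?_map, List.getLast?_eq_getLast hne] at hst
    cases hst
    exact hwt
  · intro h'
    exact absurd (by simpa using h') hne

end Glue
end BG
namespace BG
variable {V : Type} {G : BG V}

lemma ne_nil_of_getLast? {α : Type*} {l : List α} {a : α} (h : l.getLast? = some a) :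
    l ≠ [] := by rintro rfl; simp at h

lemma getLast_eq_of_getLast? {α : Type*} {l : List α} {a : α} (h : l.getLast? = some a) :
    ∀ hne : l ≠ [], l.getLast hne = a := by
  intro hne
  rw [List.getLast?_eq_getLast hne] at h
  exact Option.some_injective _ h

lemma head_eq_of_head? {α : Type*} {l : List α} {a : α} (h : l.head? = some a) :
    ∀ hne : l ≠ [], l.head hne = a := by
  intro hne
  rw [List.head?_eq_head hne] at h
  exact Option.some_injective _ h

lemma IsDitrail.split_left' {p q : List G.Step} {x y : V} {a : G.Step}
    (h : G.IsDitrail (p ++ q) x y) (ha : p.getLast? = some a) :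
    G.IsDitrail p x (G.tgt a) := by
  have hne : p ≠ [] := ne_nil_of_getLast? ha
  have := h.split_left hne
  rwa [getLast_eq_of_getLast? ha hne] at this

lemma IsDitrail.split_right' {p q : List G.Step} {x y : V} {b : G.Step}
    (h : G.IsDitrail (p ++ q) x y) (hb : q.head? = some b) :
    G.IsDitrail q (G.src b) y := by
  have hne : q ≠ [] := by rintro rfl; simp at hb
  have := h.split_right hne
  rwa [head_eq_of_head? hb hne] at this

lemma IsDitrail.split_junction' {p q : List G.Step} {x y : V} {a b : G.Step}
    (h : G.IsDitrail (p ++ q) x y) (ha : p.getLast? = some a) (hb : q.head? = some b) :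
    G.tgt a = G.src b ∧ G.tsign a = !G.ssign b := by
  have hpne : p ≠ [] := ne_nil_of_getLast? ha
  have hqne : q ≠ [] := by rintro rfl; simp at hb
  have := h.split_junction hpne hqne
  rwa [getLast_eq_of_getLast? ha hpne, head_eq_of_head? hb hqne] at this

end BG
namespace BG
section Glue
variable {VG VH : Type} {G : BG VG} {H : BG VH} {s : VG} {f1 f2 : G.E → VH}

local notation "Ĝ" => glue G H s f1 f2
local notation "LG" => liftG G H s f1 f2
local notation "LH" => liftH G H s f1 f2

lemma head?_dropWhile_not {γ : Type*} (P : γ → Bool) :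
    ∀ (l : List γ) (a : γ), (l.dropWhile P).head? = some a → P a = false := by
  intro l
  induction l with
  | nil => intro a ha; simp at ha
  | cons b t ih =>
    intro a ha
    by_cases hPb : P b
    · rw [List.dropWhile_cons_of_pos hPb] at ha
      exact ih a ha
    · rw [List.dropWhile_cons_of_neg hPb] at ha
      rw [List.head?_cons] at ha
      cases ha
      exact Bool.eq_false_iff.mpr hPb

lemma mem_of_takeWhile {γ : Type*} {P : γ → Bool} {l : List γ} {a : γ}
    (h : a ∈ l.takeWhile P) : P a = true := List.mem_takeWhile_imp h

/-- decompose a list at its last block of elements not satisfying `R` -/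
lemma exists_decomp {γ : Type*} (R : γ → Bool) {p : List γ}
    (h : ¬ ∀ st ∈ p, R st = true) :
    ∃ A B C : List γ, p = A ++ (B ++ C) ∧ B ≠ [] ∧ (∀ st ∈ B, R st = false) ∧
      (∀ st ∈ C, R st = true) ∧ (∀ st, A.getLast? = some st → R st = true) := by
  have h1 : List.takeWhile R p.reverse ++ List.dropWhile R p.reverse = p.reverse :=
    List.takeWhile_append_dropWhile (p := R) (l := p.reverse)
  rcases hq2 : List.dropWhile R p.reverse with _ | ⟨a, t⟩
  · exfalso
    apply h
    intro st hst
    have hst' : st ∈ p.reverse := List.mem_reverse.mpr hst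
    rw [← h1, hq2, List.append_nil] at hst'
    exact mem_of_takeWhile hst'
  · have ha : R a = false := head?_dropWhile_not R p.reverse a (by rw [hq2]; rfl)
    refine ⟨(List.dropWhile (fun x => !R x) (a :: t)).reverse,
      (List.takeWhile (fun x => !R x) (a :: t)).reverse,
      (List.takeWhile R p.reverse).reverse, ?_, ?_, ?_, ?_, ?_⟩
    · have h3 : p.reverse = List.takeWhile R p.reverse ++
          (List.takeWhile (fun x => !R x) (a :: t) ++
            List.dropWhile (fun x => !R x) (a :: t)) := by
        rw [List.takeWhile_append_dropWhile, ← hq2, h1]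
      have hr : p = (a :: t).reverse ++ (List.takeWhile R p.reverse).reverse := by
        rw [← List.reverse_append, ← hq2, h1, List.reverse_reverse]
      refine hr.trans ?_
      conv_lhs => rw [← List.takeWhile_append_dropWhile (p := fun x => !R x) (l := a :: t)]
      rw [List.reverse_append, List.append_assoc]
    · rw [List.takeWhile_cons_of_pos (by simp [ha])]
      simp
    · intro st hst
      rw [List.mem_reverse] at hst
      have := mem_of_takeWhile hst
      simpa using this
    · intro st hst
      rw [List.mem_reverse] at hst
      exact mem_of_takeWhile hst
    · intro st hst
      rw [List.getLast?_reverse] at hst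
      have := head?_dropWhile_not (fun x => !R x) (a :: t) st hst
      simpa using this

/-- the main induction ("★"): a ditrail in the gluing sum starting on the `H`-side and
ending at `r`, or ending at a vertex of `S` with entering sign `!α`, yields an
`H`-ditrail from the same vertex to `r` with the same start sign. -/
lemma star {α : Bool} {r : VH} {S : Set VH}
    (hsub : ¬ G.Reach (!α) (!α) s s) (hH : H.IsSemiradial α r)
    (hS : ∀ v ∈ S, ¬ H.ReachS (!α) v r)
    (hf1 : ∀ e, f1 e ∈ S) (hf2 : ∀ e, f2 e ∈ S) :
    ∀ (n : ℕ) (p : List (Ĝ).Step) (x : VH) (Z : VG ⊕ VH) (β : Bool), p.length ≤ n →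
      (Ĝ).IsDitrail p (Sum.inr x) Z →
      (Z = Sum.inr r ∨ ∃ u ∈ S, Z = Sum.inr u ∧
        ∃ st, p.getLast? = some st ∧ (Ĝ).tsign st = !α) →
      (∀ st, p.head? = some st → (Ĝ).ssign st = β) →
      H.ReachS β x r := by
  have hrS : r ∉ S := fun hr => hS r hr (reachS_rfl _ _)
  intro n
  induction n with
  | zero =>
    intro p x Z β hlen hp hZ hhead
    have hpnil : p = [] := List.length_eq_zero_iff.mp (Nat.le_zero.mp hlen)
    subst hpnil
    rcases hZ with rfl | ⟨u, hu, rfl, st, hst, -⟩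
    · cases (Sum.inr_injective (hp.2.2.2.2 rfl) : x = r)
      exact reachS_rfl _ _
    · simp at hst
  | succ n ihn =>
    intro p x Z β hlen hp hZ hhead
    by_cases hall : ∀ st ∈ p, st.1.isRight = true
    · -- no `G`-steps: project to `H`
      obtain ⟨q, rfl⟩ := exists_map_liftH hall
      rcases eq_or_ne q [] with rfl | hqne
      · rcases hZ with rfl | ⟨u, hu, rfl, st, hst, -⟩
        · cases (Sum.inr_injective (hp.2.2.2.2 rfl) : x = r)
          exact reachS_rfl _ _
        · simp at hst
      have hhd : ∀ st, q.head? = some st → H.ssign st = β := by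
        intro st hst
        have := hhead (LH st) (by rw [List.head?_map, hst]; rfl)
        rwa [ssign_liftH] at this
      rcases hZ with rfl | ⟨u, hu, rfl, st, hst, hts⟩
      · exact reachS_of_ditrail' (isDitrail_liftH_iff.mp hp) hqne hhd
      · refine lemma_L hH hS hu (isDitrail_liftH_iff.mp hp) hqne hhd ?_
        intro st' hst'
        rw [getLast?_map, hst'] at hst
        cases hst
        rwa [tsign_liftH] at hts
    · -- there is a `G`-step; decompose `p = A ++ (B ++ C)` at the last block of `G`-steps
      obtain ⟨A, B, C, hpdec0, hBne0, hBleft0, hCright, hAlastR⟩ :=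
        exists_decomp (fun st : (Ĝ).Step => st.1.isRight) hall
      have hBleft : ∀ st ∈ B, st.1.isLeft = true := by
        intro st hst
        have := hBleft0 st hst
        rcases hsum : st.1 with e | e
        · rfl
        · rw [hsum] at this; simp at this
      obtain ⟨pB, hpB⟩ := exists_map_liftG hBleft
      obtain ⟨pC, hpC⟩ := exists_map_liftH hCright
      subst hpB
      subst hpC
      subst hpdec0
      have hpBne : pB ≠ [] := fun hnil => hBne0 (by simp [hnil])
      have hBne : pB.map LG ≠ [] := by simp [hpBne]
      set bhd := pB.head hpBne with hbhd
      set blast := pB.getLast hpBne with hblast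
      have hheadB : (pB.map LG).head? = some (LG bhd) := by
        rw [List.head?_map, List.head?_eq_head hpBne]; rfl
      have hlastB : (pB.map LG).getLast? = some (LG blast) := by
        rw [getLast?_map, List.getLast?_eq_getLast hpBne]; rfl
      have hheadBC : (pB.map LG ++ pC.map LH).head? = some (LG bhd) := by
        rw [head?_append_left hBne]; exact hheadB
      have hBC : (Ĝ).IsDitrail (pB.map LG ++ pC.map LH) ((Ĝ).src (LG bhd)) Z :=
        hp.split_right' hheadBC
      have hB : (Ĝ).IsDitrail (pB.map LG) ((Ĝ).src (LG bhd)) ((Ĝ).tgt (LG blast)) :=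
        hBC.split_left' hlastB
      -- the source of `B` is some `inr u'` with `u' ∈ S`
      have hu' : ∃ u', (Ĝ).src (LG bhd) = Sum.inr u' ∧ u' ∈ S := by
        rcases eq_or_ne A [] with rfl | hAne
        · have hheadp : (([] : List (Ĝ).Step) ++ (pB.map LG ++ pC.map LH)).head?
              = some (LG bhd) := by rw [List.nil_append]; exact hheadBC
          have hsrc := hp.2.2.1 _ hheadp
          refine ⟨x, hsrc, ?_⟩
          obtain ⟨-, hw⟩ := src_liftG_inr hsrc
          rcases hw with hww | hww
          · rw [hww]; exact hf1 _
          · rw [hww]; exact hf2 _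
        · obtain ⟨alast, halast⟩ : ∃ a, A.getLast? = some a :=
            ⟨A.getLast hAne, List.getLast?_eq_getLast hAne⟩
          have hj := hp.split_junction' halast hheadBC
          obtain ⟨e, he⟩ := Sum.isRight_iff.mp (hAlastR _ halast)
          have h5 : (Ĝ).tgt alast = Sum.inr (H.tgt (e, alast.2)) := by
            have h6 : alast = LH (e, alast.2) := Prod.ext he rfl
            calc (Ĝ).tgt alast = (Ĝ).tgt (LH (e, alast.2)) := congrArg _ h6
              _ = Sum.inr (H.tgt (e, alast.2)) := tgt_liftH _
          have hsrc : (Ĝ).src (LG bhd) = Sum.inr (H.tgt (e, alast.2)) := by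
            rw [← hj.1]; exact h5
          refine ⟨_, hsrc, ?_⟩
          obtain ⟨-, hw⟩ := src_liftG_inr hsrc
          rcases hw with hww | hww
          · rw [hww]; exact hf1 _
          · rw [hww]; exact hf2 _
      obtain ⟨u', hu'eq, hu'S⟩ := hu'
      -- the target of `B` is some `inr v'` with `v' ∈ S`, and the end sign of `B` is `!α`
      have hv' : ∃ v', (Ĝ).tgt (LG blast) = Sum.inr v' ∧ v' ∈ S ∧ G.tsign blast = !α := by
        rcases eq_or_ne pC [] with rfl | hpCne
        · have hlastp : (A ++ (pB.map LG ++ List.map LH [])).getLast?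
              = some (LG blast) := by
            simp only [List.map_nil, List.append_nil]
            rw [getLast?_append_right hBne]; exact hlastB
          have hZt : (Ĝ).tgt (LG blast) = Z := hp.2.2.2.1 _ hlastp
          rcases hZ with rfl | ⟨u, hu, rfl, st, hst, hts⟩
          · exfalso
            obtain ⟨-, hw⟩ := tgt_liftG_inr hZt
            rcases hw with hww | hww
            · exact hrS (hww ▸ hf1 _)
            · exact hrS (hww ▸ hf2 _)
          · refine ⟨u, hZt, hu, ?_⟩
            rw [hlastp] at hst
            cases hst
            rwa [tsign_liftG] at hts
        · have hCne : pC.map LH ≠ [] := by simp [hpCne]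
          have hheadC : (pC.map LH).head? = some (LH (pC.head hpCne)) := by
            rw [List.head?_map, List.head?_eq_head hpCne]; rfl
          have hjBC := hBC.split_junction' hlastB hheadC
          have hv'eq : (Ĝ).tgt (LG blast) = Sum.inr (H.src (pC.head hpCne)) := by
            rw [hjBC.1, src_liftH]
          have hv'S : H.src (pC.head hpCne) ∈ S := by
            obtain ⟨-, hw⟩ := tgt_liftG_inr hv'eq
            rcases hw with hww | hww
            · rw [hww]; exact hf1 _
            · rw [hww]; exact hf2 _
          have hC := hBC.split_right' hheadC
          rw [src_liftH] at hC
          have hsC : H.ssign (pC.head hpCne) = !(G.tsign blast) := by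
            have h7 := hjBC.2
            rw [tsign_liftG, ssign_liftH] at h7
            rw [h7, Bool.not_not]
          have hreach : H.ReachS (!(G.tsign blast)) (H.src (pC.head hpCne)) r := by
            rcases hZ with rfl | ⟨u, hu, rfl, st, hst, hts⟩
            · have hpCd : H.IsDitrail pC (H.src (pC.head hpCne)) r :=
                isDitrail_liftH_iff.mp hC
              refine reachS_of_ditrail' hpCd hpCne (fun st' hst' => ?_)
              rw [List.head?_eq_head hpCne] at hst'
              cases hst'
              exact hsC
            · have hpCd : H.IsDitrail pC (H.src (pC.head hpCne)) u :=
                isDitrail_liftH_iff.mp hC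
              refine lemma_L hH hS hu hpCd hpCne (fun st' hst' => ?_) (fun st' hst' => ?_)
              · rw [List.head?_eq_head hpCne] at hst'
                cases hst'
                exact hsC
              · have hlastp : (A ++ (pB.map LG ++ pC.map LH)).getLast?
                    = some (LH st') := by
                  rw [List.getLast?_append, getLast?_append_right hCne, getLast?_map, hst']
                  rfl
                rw [hlastp] at hst
                cases hst
                rwa [tsign_liftH] at hts
          refine ⟨_, hv'eq, hv'S, ?_⟩
          by_contra hne'
          have h8 : (!(G.tsign blast)) = !α := by
            have h9 := bool_eq_not_of_ne hne'
            rw [Bool.not_not] at h9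
            rw [h9]
          rw [h8] at hreach
          exact hS _ hv'S hreach
      obtain ⟨v', hv'eq, hv'S, hε⟩ := hv'
      -- project `B` to a closed ditrail of `G` at `s`
      rw [hu'eq, hv'eq] at hB
      have hpBdit : G.IsDitrail pB s s := by
        have := isDitrail_liftG_proj hB
        simpa [pv] using this
      -- by sublinearity, the start sign of `B` is `α`
      have hδ : G.ssign bhd = α := by
        by_contra hne'
        have hδval : G.ssign bhd = !α := bool_eq_not_of_ne hne'
        exact hsub (reach_of_ditrail hpBdit hpBne hδval hε)
      -- conclude
      rcases eq_or_ne A [] with rfl | hAne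
      · have hheadp : (([] : List (Ĝ).Step) ++ (pB.map LG ++ pC.map LH)).head?
            = some (LG bhd) := by rw [List.nil_append]; exact hheadBC
        have hβ : β = α := by
          have := hhead _ hheadp
          rw [ssign_liftG, hδ] at this
          exact this.symm
        have hxu : x = u' := by
          have := hp.2.2.1 _ hheadp
          rw [hu'eq] at this
          exact (Sum.inr_injective this).symm
        rw [hβ]
        exact hH x
      · obtain ⟨alast, halast⟩ : ∃ a, A.getLast? = some a :=
          ⟨A.getLast hAne, List.getLast?_eq_getLast hAne⟩
        have hj := hp.split_junction' halast hheadBC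
        have hA : (Ĝ).IsDitrail A (Sum.inr x) ((Ĝ).tgt alast) := hp.split_left' halast
        have hAtgt : (Ĝ).tgt alast = Sum.inr u' := hj.1.trans hu'eq
        have hAts : (Ĝ).tsign alast = !α := by
          have := hj.2
          rwa [ssign_liftG, hδ] at this
        have hlenA : A.length ≤ n := by
          have h9 : (A ++ (pB.map LG ++ pC.map LH)).length
              = A.length + (pB.map LG).length + (pC.map LH).length := by
            simp [List.length_append]
            ring
          have hBpos : 0 < (pB.map LG).length := List.length_pos_iff.mpr hBne
          omega
        refine ihn A x (Sum.inr u') β hlenA (hAtgt ▸ hA) ?_ ?_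
        · exact Or.inr ⟨u', hu'S, rfl, alast, halast, hAts⟩
        · intro st hst
          refine hhead st ?_
          rw [head?_append_left hAne]
          exact hst

end Glue
end BG
namespace BG
section Glue
variable {VG VH : Type} {G : BG VG} {H : BG VH} {s : VG} {f1 f2 : G.E → VH}

local notation "Ĝ" => glue G H s f1 f2
local notation "LG" => liftG G H s f1 f2
local notation "LH" => liftH G H s f1 f2

lemma step_isLeft_of_src_inl {st : (Ĝ).Step} {w : VG} (h : (Ĝ).src st = Sum.inl w) :
    st.1.isLeft = true := by
  rcases hs : st.1 with e | e
  · rfl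
  · exfalso
    have h6 : st = LH (e, st.2) := Prod.ext hs rfl
    have h7 : (Ĝ).src st = Sum.inr (H.src (e, st.2)) := by
      calc (Ĝ).src st = (Ĝ).src (LH (e, st.2)) := congrArg _ h6
        _ = Sum.inr (H.src (e, st.2)) := src_liftH _
    rw [h] at h7
    exact absurd h7 (by simp)

lemma steps_left {q : List (Ĝ).Step} {w : VG} {Y : VG ⊕ VH}
    (h : (Ĝ).IsDitrail q (Sum.inl w) Y)
    (hint : ∀ st ∈ q.dropLast, ((Ĝ).tgt st).isLeft = true) :
    ∀ st ∈ q, st.1.isLeft = true := by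
  induction q generalizing w with
  | nil => simp
  | cons a t ih =>
    intro st hst
    have hsrca : (Ĝ).src a = Sum.inl w := h.2.2.1 a rfl
    rcases List.mem_cons.mp hst with rfl | hst'
    · exact step_isLeft_of_src_inl hsrca
    · have htne : t ≠ [] := List.ne_nil_of_mem hst'
      obtain ⟨b, hb⟩ : ∃ b, t.head? = some b := ⟨t.head htne, List.head?_eq_head htne⟩
      have hsplit : a :: t = [a] ++ t := rfl
      have hright := (hsplit ▸ h).split_right' hb
      have hj := (hsplit ▸ h).split_junction'
        (by rfl : ([a] : List (Ĝ).Step).getLast? = some a) hb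
      have hta : ((Ĝ).tgt a).isLeft = true := by
        refine hint a ?_
        rcases t with _ | ⟨c, t''⟩
        · exact absurd rfl htne
        · simp
      obtain ⟨w', hw'⟩ := Sum.isLeft_iff.mp hta
      rw [hw'] at hj
      have hsrcb : (Ĝ).src b = Sum.inl w' := hj.1.symm
      rw [hsrcb] at hright
      refine ih hright ?_ st hst'
      intro st'' hst''
      refine hint st'' ?_
      rcases t with _ | ⟨c, t''⟩
      · exact absurd rfl htne
      · simp only [List.dropLast_cons₂, List.mem_cons] at hst'' ⊢
        exact Or.inr hst''

end Glue
end BG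

theorem stmt15 {VG VH : Type} (G : BG VG) (H : BG VH) (α : Bool) (s : VG) (r : VH)
    (hG : G.IsRadial α s) (hsub : ¬ G.Reach (!α) (!α) s s)
    (hH : H.IsSemiradial α r)
    (S : Set VH) (hS : ∀ v ∈ S, ¬ H.ReachS (!α) v r)
    (f1 f2 : G.E → VH) (hf1 : ∀ e, f1 e ∈ S) (hf2 : ∀ e, f2 e ∈ S) :
    ∀ β : Bool,
      (∀ x : VG, x ≠ s →
        ((BG.glue G H s f1 f2).ReachS β (Sum.inl x) (Sum.inr r) ↔
          G.Reach β (!α) x s)) ∧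
      (∀ x : VH,
        ((BG.glue G H s f1 f2).ReachS β (Sum.inr x) (Sum.inr r) ↔
          H.ReachS β x r)) := by
  have hrS : r ∉ S := fun hr => hS r hr (BG.reachS_rfl _ _)
  intro β
  constructor
  · intro x hxs
    constructor
    · -- (i) ⇒
      rintro ⟨τ, hreach⟩
      rcases BG.reach_elim hreach with ⟨heq, -⟩ | ⟨p, hne, hp, hh, hl⟩
      · exact absurd heq (by simp)
      · have hex : ∃ st ∈ p, ((BG.glue G H s f1 f2).tgt st).isRight = true := by
          refine ⟨p.getLast hne, List.getLast_mem hne, ?_⟩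
          rw [hp.2.2.2.1 _ (List.getLast?_eq_getLast hne)]
          rfl
        obtain ⟨P₁, st₀, P₂, hsplit, hst₀R, hP₁⟩ := BG.exists_first_split
          (fun st => ((BG.glue G H s f1 f2).tgt st).isRight = true) hex
        subst hsplit
        have hassoc : P₁ ++ st₀ :: P₂ = (P₁ ++ [st₀]) ++ P₂ := by simp
        have hlast₁ : (P₁ ++ [st₀]).getLast? = some st₀ := BG.getLast?_concat _ _
        have hleft := (hassoc ▸ hp).split_left' hlast₁
        obtain ⟨v, hveq⟩ := Sum.isRight_iff.mp hst₀R
        have hallL : ∀ st ∈ P₁ ++ [st₀], st.1.isLeft = true := by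
          refine BG.steps_left hleft ?_
          intro st hst
          rw [List.dropLast_concat] at hst
          have h1 := hP₁ st hst
          rcases hsum : ((BG.glue G H s f1 f2).tgt st) with z | z
          · rfl
          · rw [hsum] at h1; simp at h1
        obtain ⟨pG, hpG⟩ := BG.exists_map_liftG hallL
        rw [hpG, hveq] at hleft
        have hproj := BG.isDitrail_liftG_proj hleft
        have hprojd : G.IsDitrail pG x s := by simpa [BG.pv] using hproj
        have hpGne : pG ≠ [] := by
          intro hnil; rw [hnil] at hpG; simp at hpG
        have hlastpG : (pG.map (BG.liftG G H s f1 f2)).getLast?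
            = some (BG.liftG G H s f1 f2 (pG.getLast hpGne)) := by
          rw [BG.getLast?_map, List.getLast?_eq_getLast hpGne]; rfl
        have hst₀eq : BG.liftG G H s f1 f2 (pG.getLast hpGne) = st₀ := by
          have h2 := hlast₁
          rw [hpG, hlastpG] at h2
          exact Option.some_injective _ h2
        have hvS : v ∈ S := by
          have hveq' : (BG.glue G H s f1 f2).tgt
              (BG.liftG G H s f1 f2 (pG.getLast hpGne)) = Sum.inr v := by
            rw [hst₀eq]; exact hveq
          obtain ⟨-, hw⟩ := BG.tgt_liftG_inr hveq'
          rcases hw with hww | hww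
          · rw [hww]; exact hf1 _
          · rw [hww]; exact hf2 _
        have hheadpG : ∀ st, pG.head? = some st → G.ssign st = β := by
          intro st hst
          have h3 : (P₁ ++ st₀ :: P₂).head? = some (BG.liftG G H s f1 f2 st) := by
            rw [hassoc, BG.head?_append_left (by simp : P₁ ++ [st₀] ≠ []), hpG,
              List.head?_map, hst]
            rfl
          have h4 := BG.head_eq_of_head? h3 hne
          rw [← hh, h4, BG.ssign_liftG]
        have hP₂ne : P₂ ≠ [] := by
          rintro rfl
          have h5 : (P₁ ++ st₀ :: ([] : List (BG.glue G H s f1 f2).Step)).getLast?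
              = some st₀ := by rw [hassoc, List.append_nil]; exact hlast₁
          have h6 := hp.2.2.2.1 _ h5
          rw [hveq] at h6
          cases Sum.inr_injective h6
          exact hrS hvS
        obtain ⟨hd₂, hhd₂⟩ : ∃ b, P₂.head? = some b :=
          ⟨P₂.head hP₂ne, List.head?_eq_head hP₂ne⟩
        have hsuf := (hassoc ▸ hp).split_right' hhd₂
        have hj := (hassoc ▸ hp).split_junction' hlast₁ hhd₂
        have hsrc₂ : (BG.glue G H s f1 f2).src hd₂ = Sum.inr v := by
          rw [← hj.1, hveq]
        rw [hsrc₂] at hsuf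
        have hstar := BG.star hsub hH hS hf1 hf2 P₂.length P₂ v (Sum.inr r)
          ((BG.glue G H s f1 f2).ssign hd₂) le_rfl hsuf (Or.inl rfl)
          (fun st hst => by rw [hhd₂] at hst; cases hst; rfl)
        have hip : (BG.glue G H s f1 f2).ssign hd₂ ≠ !α :=
          fun hcon => hS v hvS (hcon ▸ hstar)
        have hss : (BG.glue G H s f1 f2).ssign hd₂
            = !(BG.glue G H s f1 f2).tsign st₀ := by
          rw [hj.2, Bool.not_not]
        have h10 : (BG.glue G H s f1 f2).tsign st₀ ≠ α :=
          fun hcc => hip (by rw [hss, hcc])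
        have htst := BG.bool_eq_not_of_ne h10
        have hγ : G.tsign (pG.getLast hpGne) = !α := by
          rw [← hst₀eq] at htst
          rwa [BG.tsign_liftG] at htst
        exact BG.reach_of_ditrail' hprojd hpGne hheadpG
          (fun st hst => by
            rw [List.getLast?_eq_getLast hpGne] at hst; cases hst; exact hγ)
    · -- (i) ⇐
      intro hreach
      rcases BG.reach_elim hreach with ⟨heq, -⟩ | ⟨p, hne, hp, hh, hl⟩
      · exact absurd heq hxs
      · have hex : ∃ st ∈ p, G.tgt st = s :=
          ⟨p.getLast hne, List.getLast_mem hne, hp.2.2.2.1 _ (List.getLast?_eq_getLast hne)⟩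
        obtain ⟨P₁, st₀, P₂, hsplit, hst₀, hP₁⟩ := BG.exists_first_split _ hex
        subst hsplit
        have hassoc : P₁ ++ st₀ :: P₂ = (P₁ ++ [st₀]) ++ P₂ := by simp
        have hlast₁ : (P₁ ++ [st₀]).getLast? = some st₀ := BG.getLast?_concat _ _
        have hleft := (hassoc ▸ hp).split_left' hlast₁
        rw [hst₀] at hleft
        have hγ : G.tsign st₀ = !α := by
          rcases eq_or_ne P₂ [] with rfl | hP₂ne
          · have h5 : (P₁ ++ st₀ :: ([] : List G.Step)).getLast? = some st₀ := by
              rw [hassoc, List.append_nil]; exact hlast₁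
            have h6 := BG.getLast_eq_of_getLast? h5 hne
            rw [← h6]
            exact hl
          · obtain ⟨hd₂, hhd₂⟩ : ∃ b, P₂.head? = some b :=
              ⟨P₂.head hP₂ne, List.head?_eq_head hP₂ne⟩
            have hsuf := (hassoc ▸ hp).split_right' hhd₂
            have hj := (hassoc ▸ hp).split_junction' hlast₁ hhd₂
            have hsrc : G.src hd₂ = s := by rw [← hj.1, hst₀]
            rw [hsrc] at hsuf
            have hlastP₂ : G.tsign (P₂.getLast hP₂ne) = !α := by
              have h7 : (P₁ ++ st₀ :: P₂).getLast? = P₂.getLast? := by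
                rw [hassoc, BG.getLast?_append_right hP₂ne]
              have h8 := BG.getLast_eq_of_getLast? (l := P₁ ++ st₀ :: P₂)
                (by rw [h7]; exact List.getLast?_eq_getLast hP₂ne) hne
              rw [← h8]
              exact hl
            have hnotsub : G.ssign hd₂ ≠ !α := by
              intro hcon
              refine hsub (BG.reach_of_ditrail' hsuf hP₂ne ?_ ?_)
              · intro st hst
                rw [hhd₂] at hst; cases hst; exact hcon
              · intro st hst
                rw [List.getLast?_eq_getLast hP₂ne] at hst; cases hst; exact hlastP₂
            have h9 : G.ssign hd₂ = α := by
              have := BG.bool_eq_not_of_ne hnotsub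
              rwa [Bool.not_not] at this
            rw [hj.2, h9]
        have hint : ∀ st ∈ (P₁ ++ [st₀]).dropLast, G.tgt st ≠ s := by
          rw [List.dropLast_concat]
          intro st hst
          exact hP₁ st hst
        obtain ⟨w, hwor, hdit⟩ := BG.isDitrail_liftG_lift (f1 := f1) (f2 := f2)
          (H := H) hleft (by simp) hxs hint
        have hwS : w ∈ S := by
          rcases hwor with hww | hww
          · rw [hww]; exact hf1 _
          · rw [hww]; exact hf2 _
        obtain ⟨βq, hQ⟩ := hH w
        rcases BG.reach_elim hQ with ⟨rfl, -⟩ | ⟨pQ, hQne, hQd, hQh, hQl⟩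
        · exact absurd hwS hrS
        · have hlift := BG.isDitrail_liftH_iff (s := s) (f1 := f1) (f2 := f2).mpr hQd
          have happ := hdit.append hlift ?_ ?_
          · refine BG.reachS_of_ditrail' happ (by simp) ?_
            intro st hst
            rw [BG.head?_append_left (by simp : (P₁ ++ [st₀]).map (BG.liftG G H s f1 f2) ≠ []),
              List.head?_map] at hst
            obtain ⟨st', hst', rfl⟩ := Option.map_eq_some_iff.mp hst
            rw [BG.ssign_liftG]
            have h3 : (P₁ ++ st₀ :: P₂).head? = some st' := by
              rw [hassoc, BG.head?_append_left (by simp : P₁ ++ [st₀] ≠ [])]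
              exact hst'
            have h4 := BG.head_eq_of_head? h3 hne
            rw [← hh, h4]
          · intro a ha b hb
            simp only [List.mem_map] at ha hb
            obtain ⟨a', -, rfl⟩ := ha
            obtain ⟨b', -, rfl⟩ := hb
            simp [BG.liftG, BG.liftH]; exact Sum.inl_ne_inr
          · intro a b ha hb
            have hlasteq : ((P₁ ++ [st₀]).map (BG.liftG G H s f1 f2)).getLast?
                = some (BG.liftG G H s f1 f2 st₀) := by
              rw [BG.getLast?_map, hlast₁]; rfl
            rw [hlasteq] at ha
            cases ha
            rw [List.head?_map, List.head?_eq_head hQne, Option.map_some] at hb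
            have hbval : BG.liftH G H s f1 f2 (pQ.head hQne) = b :=
              Option.some_injective _ hb
            rw [← hbval, BG.tsign_liftG, BG.ssign_liftH, hγ, hQh]
  · intro x
    constructor
    · -- (ii) ⇒
      rintro ⟨τ, hreach⟩
      rcases BG.reach_elim hreach with ⟨heq, -⟩ | ⟨p, hne, hp, hh, hl⟩
      · cases (Sum.inr_injective heq : x = r)
        exact BG.reachS_rfl _ _
      · exact BG.star hsub hH hS hf1 hf2 p.length p x (Sum.inr r) β le_rfl hp (Or.inl rfl)
          (fun st hst => by rw [List.head?_eq_head hne] at hst; cases hst; exact hh)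
    · -- (ii) ⇐
      rintro ⟨τ, hreach⟩
      rcases BG.reach_elim hreach with ⟨rfl, -⟩ | ⟨p, hne, hpd, hh, hl⟩
      · exact BG.reachS_rfl _ _
      · have hlift := (BG.isDitrail_liftH_iff (G := G) (s := s) (f1 := f1) (f2 := f2)).mpr hpd
        refine BG.reachS_of_ditrail' hlift (by simp [hne]) ?_
        intro st hst
        rw [List.head?_map, List.head?_eq_head hne] at hst
        obtain ⟨st', hst', rfl⟩ := Option.map_eq_some_iff.mp hst
        cases hst'
        rw [BG.ssign_liftH]
        exact hh
end

section
/- Let α ∈ {+,−}, and let G and H be disjoint bidirected graphs such that G is a sharp α-semiradial with root s and H is a strong α-radial with root r. Then any gluing sum (G;s) ⊕ (H;V(H)) is an α-radial with strong root r whose strong ground is H. -/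
namespace StmtAux

section lists
variable {A B : Type*}

theorem first_occ {P : A → Prop} :
    ∀ {l : List A}, (∃ a ∈ l, P a) →
      ∃ l₁ a l₂, l = l₁ ++ a :: l₂ ∧ (∀ b ∈ l₁, ¬ P b) ∧ P a := by
  intro l
  induction l with
  | nil => rintro ⟨a, ha, -⟩; exact absurd ha List.not_mem_nil
  | cons x xs ih =>
    intro hex
    by_cases hx : P x
    · exact ⟨[], x, xs, rfl, by simp, hx⟩
    · have hex' : ∃ a ∈ xs, P a := by
        obtain ⟨a, ha, hPa⟩ := hex
        rcases List.mem_cons.mp ha with rfl | ha'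
        · exact absurd hPa hx
        · exact ⟨a, ha', hPa⟩
      obtain ⟨l₁, a, l₂, hdec, h1, h2⟩ := ih hex'
      refine ⟨x :: l₁, a, l₂, by rw [hdec]; rfl, ?_, h2⟩
      intro b hb
      rcases List.mem_cons.mp hb with rfl | hb'
      · exact hx
      · exact h1 b hb'

theorem chain'_map_dropLast {R : A → A → Prop} {S : B → B → Prop} (f : A → B) :
    ∀ (l : List A), List.Chain' R l →
      (∀ a ∈ l.dropLast, ∀ b ∈ l, R a b → S (f a) (f b)) → List.Chain' S (l.map f)
  | [] , _, _ => List.isChain_nil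
  | [x], _, _ => List.isChain_singleton _
  | x :: y :: l, h, hm => by
    obtain ⟨hxy, h'⟩ := List.isChain_cons_cons.mp h
    refine List.isChain_cons_cons.mpr ⟨hm x (by simp) y (by simp) hxy,
      chain'_map_dropLast f (y :: l) h' ?_⟩
    intro a ha b hb hr
    refine hm a ?_ b (List.mem_cons_of_mem _ hb) hr
    rw [List.dropLast_cons₂]
    exact List.mem_cons_of_mem _ ha

theorem head?_append_left {l₁ l₂ : List A} (h : l₁ ≠ []) :
    (l₁ ++ l₂).head? = l₁.head? := by
  cases l₁ with
  | nil => exact absurd rfl h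
  | cons x xs => rfl

theorem getLast?_append_right {l₁ l₂ : List A} (h : l₂ ≠ []) :
    (l₁ ++ l₂).getLast? = l₂.getLast? := by
  exact List.getLast?_append_of_ne_nil _ h

end lists

end StmtAux
namespace StmtAux

section dit
variable {V : Type} {G : BG V}

theorem ditrail_prefix {l₁ l₂ : List G.Step} {c : G.Step} {x y : V}
    (h : G.IsDitrail (l₁ ++ c :: l₂) x y) : G.IsDitrail (l₁ ++ [c]) x (G.tgt c) := by
  obtain ⟨hnd, hch, hhd, hlast, hemp⟩ := h
  have hsub : (l₁ ++ [c]).Sublist (l₁ ++ c :: l₂) := by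
    have heq : (l₁ ++ [c]) ++ l₂ = l₁ ++ c :: l₂ := by simp
    exact heq ▸ List.sublist_append_left (l₁ ++ [c]) l₂
  have hheads : (l₁ ++ [c]).head? = (l₁ ++ c :: l₂).head? := by cases l₁ <;> rfl
  refine ⟨hnd.sublist (hsub.map Prod.fst), ?_, ?_, ?_, by simp⟩
  · have heq : l₁ ++ c :: l₂ = (l₁ ++ [c]) ++ l₂ := by simp
    rw [heq] at hch
    exact (List.isChain_append.mp hch).1
  · intro st hst
    exact hhd st (hheads ▸ hst)
  · intro st hst
    rw [List.getLast?_concat] at hst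
    cases hst
    rfl

theorem ditrail_append {p q : List G.Step} {x m y : V}
    (hp : G.IsDitrail p x m) (hq : G.IsDitrail q m y)
    (hdisj : ∀ st ∈ p, ∀ st' ∈ q, st.1 ≠ st'.1)
    (hsign : ∀ a, p.getLast? = some a → ∀ b, q.head? = some b →
      G.tsign a = !G.ssign b) :
    G.IsDitrail (p ++ q) x y := by
  obtain ⟨hnd1, hch1, hhd1, hlast1, hemp1⟩ := hp
  obtain ⟨hnd2, hch2, hhd2, hlast2, hemp2⟩ := hq
  refine ⟨?_, ?_, ?_, ?_, ?_⟩
  · rw [List.map_append, List.nodup_append]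
    refine ⟨hnd1, hnd2, ?_⟩
    intro a ha b hb
    obtain ⟨st, hst, rfl⟩ := List.mem_map.mp ha
    obtain ⟨st', hst', rfl⟩ := List.mem_map.mp hb
    exact hdisj st hst st' hst'
  · rw [List.Chain', List.isChain_append]
    refine ⟨hch1, hch2, ?_⟩
    intro a ha b hb
    refine ⟨?_, hsign a ha b hb⟩
    rw [hlast1 a ha, hhd2 b hb]
  · intro st hst
    cases hp0 : p with
    | nil =>
      subst hp0
      rw [List.nil_append] at hst
      rw [hhd2 st hst, ← hemp1 rfl]
    | cons z zs =>
      rw [hp0, head?_append_left (by simp), ← hp0] at hst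
      exact hhd1 st hst
  · intro st hst
    cases hq0 : q with
    | nil =>
      subst hq0
      rw [List.append_nil] at hst
      rw [hlast1 st hst, hemp2 rfl]
    | cons z zs =>
      rw [hq0, getLast?_append_right (by simp), ← hq0] at hst
      exact hlast2 st hst
  · intro h0
    rw [List.append_eq_nil_iff] at h0
    rw [hemp1 h0.1, hemp2 h0.2]

theorem reach_nil (G : BG V) (β : Bool) (x : V) : G.Reach (!β) β x x := by
  refine ⟨[], ⟨by simp, List.isChain_nil, ?_, ?_, fun _ => rfl⟩, ?_, ?_, ?_, rfl, rfl⟩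
  · intro st hst; cases hst
  · intro st hst; cases hst
  · intro st hst; cases hst
  · exact Set.notMem_empty _
  · intro st hst; cases hst

theorem reach_of_reachW {Es : Set G.E} {a b : Bool} {x y : V}
    (h : G.ReachW Es a b x y) : G.Reach a b x y := by
  obtain ⟨p, h1, -, h3, h4, h5, h6⟩ := h
  exact ⟨p, h1, fun st _ => trivial, h3, h4, h5, h6⟩

end dit
end StmtAux
namespace StmtAux

section glue
variable {VG VH : Type} {G : BG VG} {H : BG VH} {s : VG} {f1 f2 : G.E → VH}


theorem src_inr (e : H.E) (d : Bool) :
    (BG.glue G H s f1 f2).src (Sum.inr e, d) = Sum.inr (H.src (e, d)) := by cases d <;> rfl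

theorem tgt_inr (e : H.E) (d : Bool) :
    (BG.glue G H s f1 f2).tgt (Sum.inr e, d) = Sum.inr (H.tgt (e, d)) := by cases d <;> rfl

theorem ssign_inr (e : H.E) (d : Bool) :
    (BG.glue G H s f1 f2).ssign (Sum.inr e, d) = H.ssign (e, d) := by cases d <;> rfl

theorem tsign_inr (e : H.E) (d : Bool) :
    (BG.glue G H s f1 f2).tsign (Sum.inr e, d) = H.tsign (e, d) := by cases d <;> rfl

theorem ssign_inl (e : G.E) (d : Bool) :
    (BG.glue G H s f1 f2).ssign (Sum.inl e, d) = G.ssign (e, d) := by cases d <;> rfl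

theorem tsign_inl (e : G.E) (d : Bool) :
    (BG.glue G H s f1 f2).tsign (Sum.inl e, d) = G.tsign (e, d) := by cases d <;> rfl

theorem fst_inl_of_ne {e : G.E} (h : G.fst e ≠ s) :
    (BG.glue G H s f1 f2).fst (Sum.inl e) = Sum.inl (G.fst e) := if_neg h

theorem fst_inl_of_eq {e : G.E} (h : G.fst e = s) :
    (BG.glue G H s f1 f2).fst (Sum.inl e) = Sum.inr (f1 e) := if_pos h

theorem snd_inl_of_ne {e : G.E} (h : G.snd e ≠ s) :
    (BG.glue G H s f1 f2).snd (Sum.inl e) = Sum.inl (G.snd e) := if_neg h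

theorem snd_inl_of_eq {e : G.E} (h : G.snd e = s) :
    (BG.glue G H s f1 f2).snd (Sum.inl e) = Sum.inr (f2 e) := if_pos h

theorem src_inl_of_ne {e : G.E} {d : Bool} (h : G.src (e, d) ≠ s) :
    (BG.glue G H s f1 f2).src (Sum.inl e, d) = Sum.inl (G.src (e, d)) := by
  cases d
  · exact snd_inl_of_ne h
  · exact fst_inl_of_ne h

theorem src_inl_of_eq {e : G.E} {d : Bool} (h : G.src (e, d) = s) :
    (BG.glue G H s f1 f2).src (Sum.inl e, d) = Sum.inr (if d then f1 e else f2 e) := by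
  cases d
  · exact snd_inl_of_eq h
  · exact fst_inl_of_eq h

theorem tgt_inl_of_ne {e : G.E} {d : Bool} (h : G.tgt (e, d) ≠ s) :
    (BG.glue G H s f1 f2).tgt (Sum.inl e, d) = Sum.inl (G.tgt (e, d)) := by
  cases d
  · exact fst_inl_of_ne h
  · exact snd_inl_of_ne h

theorem tgt_inl_of_eq {e : G.E} {d : Bool} (h : G.tgt (e, d) = s) :
    (BG.glue G H s f1 f2).tgt (Sum.inl e, d) = Sum.inr (if d then f2 e else f1 e) := by
  cases d
  · exact fst_inl_of_eq h
  · exact snd_inl_of_eq h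

theorem src_inl_cases {e : G.E} {d : Bool} {z : VG}
    (h : (BG.glue G H s f1 f2).src (Sum.inl e, d) = Sum.inl z) : G.src (e, d) = z ∧ G.src (e, d) ≠ s := by
  by_cases hs : G.src (e, d) = s
  · rw [src_inl_of_eq hs] at h; cases h
  · rw [src_inl_of_ne hs] at h
    exact ⟨Sum.inl.inj h, hs⟩

theorem tgt_inl_cases {e : G.E} {d : Bool} {z : VG}
    (h : (BG.glue G H s f1 f2).tgt (Sum.inl e, d) = Sum.inl z) : G.tgt (e, d) = z ∧ G.tgt (e, d) ≠ s := by
  by_cases hs : G.tgt (e, d) = s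
  · rw [tgt_inl_of_eq hs] at h; cases h
  · rw [tgt_inl_of_ne hs] at h
    exact ⟨Sum.inl.inj h, hs⟩

end glue
end StmtAux
namespace StmtAux

section mapinr
variable {VG VH : Type} {G : BG VG} {H : BG VH} {s : VG} {f1 f2 : G.E → VH}

theorem mapInr {a b : Bool} {x y : VH} (h : H.Reach a b x y) :
    (BG.glue G H s f1 f2).ReachW (Set.range Sum.inr) a b (Sum.inr x) (Sum.inr y) := by
  obtain ⟨p, ⟨hnd, hch, hhd, hlast, hemp⟩, -, -, -, hs1, hs2⟩ := h
  refine ⟨p.map (fun st => (Sum.inr st.1, st.2)), ⟨?_, ?_, ?_, ?_, ?_⟩, ?_, ?_, ?_, ?_, ?_⟩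
  · rw [List.map_map]
    have h2 : List.Nodup (List.map ((Sum.inr : H.E → G.E ⊕ H.E) ∘ Prod.fst) p) := by
      rw [← List.map_map]
      exact hnd.map Sum.inr_injective
    exact h2
  · rw [List.Chain', List.isChain_map]
    refine hch.imp ?_
    intro a' b' hab
    exact ⟨by rw [tgt_inr, src_inr, hab.1], by rw [tsign_inr, ssign_inr, hab.2]⟩
  · intro st hst
    rw [List.head?_map] at hst
    obtain ⟨st₀, h₀, rfl⟩ := Option.map_eq_some_iff.mp hst
    rw [src_inr, hhd st₀ h₀]
  · intro st hst
    rw [List.getLast?_map] at hst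
    obtain ⟨st₀, h₀, rfl⟩ := Option.map_eq_some_iff.mp hst
    rw [tgt_inr, hlast st₀ h₀]
  · intro h0
    rw [List.map_eq_nil_iff] at h0
    rw [hemp h0]
  · intro st hst
    obtain ⟨st₀, -, rfl⟩ := List.mem_map.mp hst
    exact ⟨st₀.1, rfl⟩
  · exact Set.notMem_empty _
  · intro st _
    exact Set.notMem_empty _
  · rw [List.head?_map, Option.map_map]
    have heq : ((BG.glue G H s f1 f2).ssign ∘ fun st : H.Step => ((Sum.inr st.1 : G.E ⊕ H.E), st.2))
        = H.ssign := funext fun st => ssign_inr st.1 st.2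
    rw [heq]
    exact hs1
  · rw [List.getLast?_map, Option.map_map]
    have heq : ((BG.glue G H s f1 f2).tsign ∘ fun st : H.Step => ((Sum.inr st.1 : G.E ⊕ H.E), st.2))
        = H.tsign := funext fun st => tsign_inr st.1 st.2
    rw [heq]
    exact hs2

end mapinr
end StmtAux
namespace StmtAux

section lemc
variable {VG VH : Type} {G : BG VG} {H : BG VH} {s : VG} {f1 f2 : G.E → VH}

theorem lemC {v : VG} (hv : v ≠ s) {β : Bool} (h : G.ReachS β v s) :
    ∃ (t : VH) (γ : Bool) (q : List (BG.glue G H s f1 f2).Step),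
      (BG.glue G H s f1 f2).IsDitrail q (Sum.inl v) (Sum.inr t) ∧
      (∀ st ∈ q, ∃ eg : G.E, st.1 = Sum.inl eg) ∧
      (∀ st, q.head? = some st → (BG.glue G H s f1 f2).ssign st = β) ∧
      (∀ st, q.getLast? = some st → (BG.glue G H s f1 f2).tsign st = γ) := by
  obtain ⟨βe, p, hdit, -, -, -, hsg1, hsg2⟩ := h
  have hpne : p ≠ [] := fun h0 => hv (hdit.2.2.2.2 h0)
  have hex : ∃ st ∈ p, G.tgt st = s := by
    cases hq : p.getLast? with
    | none => exact absurd (List.getLast?_eq_none_iff.mp hq) hpne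
    | some c₀ => exact ⟨c₀, List.mem_of_getLast? hq, hdit.2.2.2.1 c₀ hq⟩
  obtain ⟨l₁, c, l₂, hdec, hnotS, hcS⟩ := first_occ hex
  subst hdec
  have hpre : G.IsDitrail (l₁ ++ [c]) v (G.tgt c) := ditrail_prefix hdit
  obtain ⟨hnd, hch, hhd, hlast, -⟩ := hpre
  set F : G.Step → (BG.glue G H s f1 f2).Step := fun st => (Sum.inl st.1, st.2) with hF
  set L : List G.Step := l₁ ++ [c] with hL
  have hheads : L.head? = (l₁ ++ c :: l₂).head? := by cases l₁ <;> rfl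
  have hLlast : L.getLast? = some c := List.getLast?_concat
  refine ⟨if c.2 then f2 c.1 else f1 c.1, (BG.glue G H s f1 f2).tsign (F c), L.map F,
    ⟨?_, ?_, ?_, ?_, ?_⟩, ?_, ?_, ?_⟩
  · -- nodup
    rw [List.map_map]
    have h2 : List.Nodup (List.map ((Sum.inl : G.E → G.E ⊕ H.E) ∘ Prod.fst) L) := by
      rw [← List.map_map]
      exact hnd.map Sum.inl_injective
    exact h2
  · -- chain
    refine chain'_map_dropLast F L hch ?_
    intro a ha b _ hab
    rw [hL, List.dropLast_concat] at ha
    have hta : G.tgt a ≠ s := hnotS a ha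
    have hsb : G.src b ≠ s := hab.1 ▸ hta
    constructor
    · show (BG.glue G H s f1 f2).tgt (Sum.inl a.1, a.2) = (BG.glue G H s f1 f2).src (Sum.inl b.1, b.2)
      rw [tgt_inl_of_ne hta, src_inl_of_ne hsb, hab.1]
    · show (BG.glue G H s f1 f2).tsign (Sum.inl a.1, a.2) = !(BG.glue G H s f1 f2).ssign (Sum.inl b.1, b.2)
      rw [tsign_inl, ssign_inl, hab.2]
  · -- head
    intro st hst
    rw [List.head?_map] at hst
    obtain ⟨st₀, h₀, rfl⟩ := Option.map_eq_some_iff.mp hst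
    have hsrc : G.src st₀ = v := hhd st₀ h₀
    have : (BG.glue G H s f1 f2).src (Sum.inl st₀.1, st₀.2) = Sum.inl (G.src st₀) :=
      src_inl_of_ne (hsrc ▸ hv)
    rw [hF]
    rw [this, hsrc]
  · -- last
    intro st hst
    rw [List.getLast?_map, hLlast] at hst
    cases hst
    show (BG.glue G H s f1 f2).tgt (Sum.inl c.1, c.2) = _
    rw [tgt_inl_of_eq hcS]
  · intro h0
    rw [List.map_eq_nil_iff, hL] at h0
    simp at h0
  · -- edges inl
    intro st hst
    obtain ⟨st₀, -, rfl⟩ := List.mem_map.mp hst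
    exact ⟨st₀.1, rfl⟩
  · -- head sign
    intro st hst
    rw [List.head?_map] at hst
    obtain ⟨st₀, h₀, rfl⟩ := Option.map_eq_some_iff.mp hst
    have hphead : (l₁ ++ c :: l₂).head? = some st₀ := by rw [← hheads]; exact h₀
    have : G.ssign st₀ = β := by rw [hphead] at hsg1; simpa using hsg1
    rw [hF]
    rw [ssign_inl]
    exact this
  · -- last sign
    intro st hst
    rw [List.getLast?_map, hLlast] at hst
    cases hst
    rfl

end lemc
end StmtAux
namespace StmtAux

section lemb
variable {VG VH : Type} {G : BG VG} {H : BG VH} {s : VG} {f1 f2 : G.E → VH}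

theorem lemB {p : List (BG.glue G H s f1 f2).Step} {v : VG} {w : VH} {β : Bool}
    (hp : (BG.glue G H s f1 f2).IsDitrail p (Sum.inl v) (Sum.inr w))
    (hβ : ∀ st, p.head? = some st → (BG.glue G H s f1 f2).ssign st = β) :
    (∃ st ∈ p, ∃ u : VG, (BG.glue G H s f1 f2).src st = Sum.inl u ∧ G.Adj u s) ∧
      G.ReachS β v s := by
  have hpne : p ≠ [] := fun h0 => by cases hp.2.2.2.2 h0
  have hex : ∃ st ∈ p, ∃ z, (BG.glue G H s f1 f2).tgt st = Sum.inr z := by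
    cases hq : p.getLast? with
    | none => exact absurd (List.getLast?_eq_none_iff.mp hq) hpne
    | some c₀ => exact ⟨c₀, List.mem_of_getLast? hq, w, hp.2.2.2.1 c₀ hq⟩
  obtain ⟨l₁, c, l₂, hdec, hnotR, z₀, hz₀⟩ := first_occ hex
  subst hdec
  have htgtL : ∀ b ∈ l₁, ∃ zb, (BG.glue G H s f1 f2).tgt b = Sum.inl zb := by
    intro b hb
    cases hΓ : (BG.glue G H s f1 f2).tgt b with
    | inl zb => exact ⟨zb, rfl⟩
    | inr zb => exact absurd ⟨zb, hΓ⟩ (hnotR b hb)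
  have hpre : (BG.glue G H s f1 f2).IsDitrail (l₁ ++ [c]) (Sum.inl v)
      ((BG.glue G H s f1 f2).tgt c) := ditrail_prefix hp
  obtain ⟨hnd, hch, hhd, hlast, -⟩ := hpre
  have hheads : (l₁ ++ [c]).head? = (l₁ ++ c :: l₂).head? := by cases l₁ <;> rfl
  have hLlast : (l₁ ++ [c]).getLast? = some c := List.getLast?_concat
  -- source of c is inl
  have hsrc : ∃ u, (BG.glue G H s f1 f2).src c = Sum.inl u := by
    cases hl₁ : l₁ with
    | nil =>
      subst hl₁
      exact ⟨v, hhd c rfl⟩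
    | cons z zs =>
      have hlink := (List.isChain_append.mp hch).2.2
      cases hql : l₁.getLast? with
      | none => rw [hl₁] at hql; simp at hql
      | some a =>
        have hac := hlink a hql c rfl
        obtain ⟨za, hza⟩ := htgtL a (List.mem_of_getLast? hql)
        exact ⟨za, by rw [← hac.1, hza]⟩
  obtain ⟨u, hu⟩ := hsrc
  -- c's edge is a G-edge
  obtain ⟨ce, cd⟩ := c
  have hcE : ∃ eg : G.E, ce = Sum.inl eg := by
    cases ce with
    | inl eg => exact ⟨eg, rfl⟩
    | inr eh => rw [src_inr] at hu; cases hu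
  obtain ⟨eg, rfl⟩ := hcE
  have hGtgt : G.tgt (eg, cd) = s := by
    by_contra h'
    rw [tgt_inl_of_ne h'] at hz₀
    cases hz₀
  obtain ⟨hGsrc, hGsrc_ne⟩ := src_inl_cases hu
  have hAdj : G.Adj u s := by
    cases cd
    · exact ⟨eg, Or.inr ⟨hGtgt, hGsrc⟩⟩
    · exact ⟨eg, Or.inl ⟨hGsrc, hGtgt⟩⟩
  refine ⟨⟨(Sum.inl eg, cd), by simp, u, hu, hAdj⟩, ?_⟩
  -- now build the G-ditrail
  set FG : (BG.glue G H s f1 f2).Step → G.Step :=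
    fun st => (Sum.elim id (fun _ => eg) st.1, st.2) with hFG
  set L : List (BG.glue G H s f1 f2).Step :=
    l₁ ++ ([((Sum.inl eg : G.E ⊕ H.E), cd)] : List (BG.glue G H s f1 f2).Step) with hL
  have hInlAll : ∀ st ∈ L, ∃ e0 : G.E, st.1 = Sum.inl e0 := by
    intro st hst
    rw [hL, List.mem_append] at hst
    rcases hst with hst | hst
    · cases he : st.1 with
      | inl e0 => exact ⟨e0, rfl⟩
      | inr eh =>
        exfalso
        obtain ⟨zb, hzb⟩ := htgtL st hst
        have : (BG.glue G H s f1 f2).tgt (Sum.inr eh, st.2) = Sum.inl zb := by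
          rw [← he]
          exact hzb
        rw [tgt_inr] at this
        cases this
    · rw [List.mem_singleton] at hst
      subst hst
      exact ⟨eg, rfl⟩
  refine ⟨G.tsign (eg, cd), L.map FG, ⟨?_, ?_, ?_, ?_, ?_⟩, fun st _ => trivial,
    Set.notMem_empty _, fun st _ => Set.notMem_empty _, ?_, ?_⟩
  · -- nodup
    rw [List.map_map]
    have hnodL : (L.map Prod.fst).Nodup := hnd
    have h2 : List.Nodup (List.map (Sum.elim id (fun _ => eg)) (L.map Prod.fst)) := by
      refine hnodL.map_on ?_
      intro x hx y hy hxy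
      obtain ⟨stx, hstx, rfl⟩ := List.mem_map.mp hx
      obtain ⟨sty, hsty, rfl⟩ := List.mem_map.mp hy
      obtain ⟨ex, hex⟩ := hInlAll stx hstx
      obtain ⟨ey, hey⟩ := hInlAll sty hsty
      rw [hex, hey] at hxy ⊢
      simp only [Sum.elim_inl, id_eq] at hxy
      rw [hxy]
    have h3 := List.map_map (l := L) (f := (Prod.fst : (BG.glue G H s f1 f2).Step → G.E ⊕ H.E))
      (g := Sum.elim id (fun _ : H.E => eg))
    exact (congrArg List.Nodup h3).mp h2
  · -- chain
    refine chain'_map_dropLast FG L hch ?_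
    intro a ha b hb hab
    rw [hL, List.dropLast_concat] at ha
    obtain ⟨ea, hea⟩ := hInlAll a (by rw [hL, List.mem_append]; exact Or.inl ha)
    obtain ⟨eb, heb⟩ := hInlAll b hb
    obtain ⟨za, hza⟩ := htgtL a ha
    have hacopy := hab.1
    have haeq : a = ((Sum.inl ea, a.2) : (BG.glue G H s f1 f2).Step) := Prod.ext hea rfl
    have hbeq : b = ((Sum.inl eb, b.2) : (BG.glue G H s f1 f2).Step) := Prod.ext heb rfl
    rw [haeq] at hza
    have hta := tgt_inl_cases hza
    have hsb : (BG.glue G H s f1 f2).src (Sum.inl eb, b.2) = Sum.inl za := by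
      have h := hab.1
      rw [haeq, hza] at h
      rw [hbeq] at h
      exact h.symm
    have htb := src_inl_cases hsb
    constructor
    · show G.tgt (Sum.elim id (fun _ => eg) a.1, a.2) = G.src (Sum.elim id (fun _ => eg) b.1, b.2)
      rw [hea, heb]
      simp only [Sum.elim_inl, id]
      rw [hta.1, htb.1]
    · show G.tsign (Sum.elim id (fun _ => eg) a.1, a.2) = !G.ssign (Sum.elim id (fun _ => eg) b.1, b.2)
      have h2 := hab.2
      rw [haeq, tsign_inl] at h2
      rw [hbeq, ssign_inl] at h2
      rw [hea, heb]
      simpa using h2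
  · -- head
    intro st hst
    rw [List.head?_map] at hst
    obtain ⟨st₀, h₀, rfl⟩ := Option.map_eq_some_iff.mp hst
    obtain ⟨e0, he0⟩ := hInlAll st₀ (List.mem_of_mem_head? h₀)
    have hsrc0 : (BG.glue G H s f1 f2).src st₀ = Sum.inl v := hhd st₀ h₀
    have hs0eq : st₀ = (Sum.inl e0, st₀.2) := Prod.ext he0 rfl
    rw [hs0eq] at hsrc0
    have := src_inl_cases hsrc0
    show G.src (Sum.elim id (fun _ => eg) st₀.1, st₀.2) = v
    rw [he0]
    simpa using this.1
  · -- last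
    intro st hst
    rw [List.getLast?_map, hL, List.getLast?_concat] at hst
    cases hst
    show G.tgt (Sum.elim id (fun _ => eg) (Sum.inl eg : G.E ⊕ H.E), cd) = s
    simpa using hGtgt
  · intro h0
    rw [List.map_eq_nil_iff, hL] at h0
    simp at h0
  · -- head sign
    rw [List.head?_map]
    cases hh : L.head? with
    | none => rw [hL] at hh; simp [List.head?_eq_none_iff] at hh
    | some st₀ =>
      have hphead : (l₁ ++ (((Sum.inl eg, cd) : (BG.glue G H s f1 f2).Step)) :: l₂).head? = some st₀ := by
        rw [← hheads]; exact hh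
      have hsgn := hβ st₀ hphead
      obtain ⟨e0, he0⟩ := hInlAll st₀ (List.mem_of_mem_head? hh)
      have hs0eq : st₀ = ((Sum.inl e0, st₀.2) : (BG.glue G H s f1 f2).Step) := Prod.ext he0 rfl
      rw [hs0eq, ssign_inl] at hsgn
      simp only [Option.map_some, Option.getD_some]
      show G.ssign (Sum.elim id (fun _ => eg) st₀.1, st₀.2) = β
      rw [he0]
      simpa using hsgn
  · -- last sign
    rw [List.getLast?_map, hL, List.getLast?_concat]
    simp only [Option.map_some, Option.getD_some]
    rfl

end lemb
end StmtAux
namespace StmtAux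

section noloop
variable {VG : Type} {G : BG VG}

theorem noLoop {α : Bool} {s : VG} (hsharp : G.SharpAt α s) :
    ∀ e : G.E, ¬ (G.fst e = s ∧ G.snd e = s) := by
  rintro e ⟨h1, h2⟩
  exact (hsharp s ⟨e, Or.inl ⟨h1, h2⟩⟩).2 ⟨α, reach_nil G α s⟩

end noloop
end StmtAux

open StmtAux in
theorem stmt16 {VG VH : Type} (G : BG VG) (H : BG VH) (α : Bool) (s : VG) (r : VH)
    (hG : G.IsSemiradial α s) (hsharp : G.SharpAt α s)
    (hH : H.IsRadial α r) (hHstrong : ∀ v, H.Reach (!α) (!α) v r)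
    (f1 f2 : G.E → VH) :
    (∀ x : VG ⊕ VH, x ≠ Sum.inl s →
      (BG.glue G H s f1 f2).Reach α (!α) x (Sum.inr r)) ∧
    (BG.glue G H s f1 f2).Reach (!α) (!α) (Sum.inr r) (Sum.inr r) ∧
    (BG.glueHcopy G H s f1 f2).IsStrong α (Sum.inr r) ∧
    (∀ K : (BG.glue G H s f1 f2).Sub, K.IsStrong α (Sum.inr r) →
      K.le (BG.glueHcopy G H s f1 f2)) := by
  refine ⟨?_, reach_of_reachW (mapInr (hHstrong r)), ?_, ?_⟩
  · -- part 1
    rintro (v | w) hx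
    · have hv : v ≠ s := fun h => hx (by rw [h])
      obtain ⟨t, γ, q, hq, hqInl, hqh, hql⟩ := lemC (H := H) (f1 := f1) (f2 := f2) hv (hG v)
      have hqne : q ≠ [] := fun h0 => by cases hq.2.2.2.2 h0
      -- choose the H-side continuation B
      have hBspec : ∃ B : List (BG.glue G H s f1 f2).Step,
          (BG.glue G H s f1 f2).IsDitrail B (Sum.inr t) (Sum.inr r) ∧
          (∀ st ∈ B, st.1 ∈ Set.range (Sum.inr : H.E → G.E ⊕ H.E)) ∧
          (∀ b, B.head? = some b → (BG.glue G H s f1 f2).ssign b = !γ) ∧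
          (B = [] → γ = !α) ∧
          (∀ b, B.getLast? = some b → (BG.glue G H s f1 f2).tsign b = !α) := by
        by_cases hγ : γ = !α
        · obtain ⟨B, hB1, hB2, -, -, hB5, hB6⟩ := mapInr (s := s) (f1 := f1) (f2 := f2) (hH t)
          refine ⟨B, hB1, hB2, ?_, fun _ => hγ, ?_⟩
          · intro b hb
            rw [hb] at hB5
            simp only [Option.map_some, Option.getD_some] at hB5
            rw [hB5, hγ]
            simp
          · intro b hb
            rw [hb] at hB6
            simpa using hB6
        · have hγα : γ = α := by cases γ <;> cases α <;> simp_all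
          obtain ⟨B, hB1, hB2, -, -, hB5, hB6⟩ :=
            mapInr (s := s) (f1 := f1) (f2 := f2) (hHstrong t)
          refine ⟨B, hB1, hB2, ?_, ?_, ?_⟩
          · intro b hb
            rw [hb] at hB5
            simp only [Option.map_some, Option.getD_some] at hB5
            rw [hB5, hγα]
          · intro h0
            rw [h0] at hB5
            simp at hB5
          · intro b hb
            rw [hb] at hB6
            simpa using hB6
      obtain ⟨B, hB1, hB2, hB3, hB4, hB5⟩ := hBspec
      have hdisj : ∀ st ∈ q, ∀ st' ∈ B, st.1 ≠ st'.1 := by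
        intro st hst st' hst' heq
        obtain ⟨eg, hegg⟩ := hqInl st hst
        obtain ⟨eh, hehh⟩ := hB2 st' hst'
        rw [hegg, ← hehh] at heq
        cases heq
      have hdit : (BG.glue G H s f1 f2).IsDitrail (q ++ B) (Sum.inl v) (Sum.inr r) :=
        ditrail_append hq hB1 hdisj (by
          intro a ha b hb
          rw [hql a ha, hB3 b hb]
          simp)
      refine ⟨q ++ B, hdit, fun st _ => trivial, Set.notMem_empty _,
        fun st _ => Set.notMem_empty _, ?_, ?_⟩
      · -- head sign
        rw [head?_append_left hqne]
        cases hh : q.head? with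
        | none => exact absurd (List.head?_eq_none_iff.mp hh) hqne
        | some st₀ =>
          simp only [Option.map_some, Option.getD_some]
          exact hqh st₀ hh
      · -- last sign
        cases hB0 : B with
        | nil =>
          subst hB0
          rw [List.append_nil]
          cases hl : q.getLast? with
          | none => exact absurd (List.getLast?_eq_none_iff.mp hl) hqne
          | some c' =>
            simp only [Option.map_some, Option.getD_some]
            rw [hql c' hl, hB4 rfl]
        | cons z zs =>
          rw [getLast?_append_right (l₂ := z :: zs) (by simp)]
          cases hl : (z :: zs).getLast? with
          | none => simp [List.getLast?_eq_none_iff] at hl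
          | some b' =>
            simp only [Option.map_some, Option.getD_some]
            exact hB5 b' (hB0 ▸ hl)
    · exact reach_of_reachW (mapInr (hH w))
  · -- part 3
    refine ⟨⟨⟨r, rfl⟩, ?_⟩, ?_⟩ <;> rintro x ⟨w, rfl⟩
    · exact mapInr (hH w)
    · exact mapInr (hHstrong w)
  · -- part 4
    intro K hK
    have hverts : K.verts ⊆ Set.range (Sum.inr : VH → VG ⊕ VH) := by
      rintro x hx
      cases x with
      | inr w => exact ⟨w, rfl⟩
      | inl v =>
        exfalso
        obtain ⟨p, hdit, hedge, -, -, h1, h2⟩ := hK.2 _ hx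
        have hβ : ∀ st, p.head? = some st → (BG.glue G H s f1 f2).ssign st = !α := by
          intro st hst
          rw [hst] at h1
          simpa using h1
        obtain ⟨⟨c, hcp, u, hcsrc, hAdj⟩, -⟩ := lemB hdit hβ
        have hcK : c.1 ∈ K.edges := hedge c hcp
        have huK : Sum.inl u ∈ K.verts := by
          obtain ⟨ce, cd⟩ := c
          cases cd
          · have hm := K.snd_mem ce hcK
            have h' : (BG.glue G H s f1 f2).src (ce, false) ∈ K.verts := hm
            rwa [hcsrc] at h'
          · have hm := K.fst_mem ce hcK
            have h' : (BG.glue G H s f1 f2).src (ce, true) ∈ K.verts := hm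
            rwa [hcsrc] at h'
        obtain ⟨p', hdit', hedge', -, -, h1', h2'⟩ := hK.2 _ huK
        have hβ' : ∀ st, p'.head? = some st → (BG.glue G H s f1 f2).ssign st = !α := by
          intro st hst
          rw [hst] at h1'
          simpa using h1'
        obtain ⟨-, hreach⟩ := lemB hdit' hβ'
        exact (hsharp u hAdj).2 hreach
    refine ⟨hverts, ?_⟩
    intro e he
    cases e with
    | inr eh => exact ⟨eh, rfl⟩
    | inl eg =>
      exfalso
      have h1 := hverts (K.fst_mem _ he)
      have h2 := hverts (K.snd_mem _ he)
      have hf : G.fst eg = s := by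
        by_contra hne
        rw [fst_inl_of_ne hne] at h1
        obtain ⟨w, hw⟩ := h1
        cases hw
      have hsn : G.snd eg = s := by
        by_contra hne
        rw [snd_inl_of_ne hne] at h2
        obtain ⟨w, hw⟩ := h2
        cases hw
      exact noLoop hsharp eg ⟨hf, hsn⟩
end

section
/- Let α ∈ {+,−}, and let G and H be disjoint bidirected graphs such that G is a sharp α-semiradial with root s and H is an absolute semiradial with root r. Then any gluing sum (G;s) ⊕ (H;V(H)) is an α-semiradial with root r whose absolute ground is H. -/
namespace BG

section Helpers

variable {VG VH : Type} {G : BG VG} {H : BG VH} {s : VG} {f1 f2 : G.E → VH}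

lemma gsrc_inr (e : H.E) (d : Bool) :
    (glue G H s f1 f2).src (Sum.inr e, d) = Sum.inr (H.src (e, d)) := by cases d <;> rfl

lemma gtgt_inr (e : H.E) (d : Bool) :
    (glue G H s f1 f2).tgt (Sum.inr e, d) = Sum.inr (H.tgt (e, d)) := by cases d <;> rfl

lemma gssign_inr (e : H.E) (d : Bool) :
    (glue G H s f1 f2).ssign (Sum.inr e, d) = H.ssign (e, d) := by cases d <;> rfl

lemma gtsign_inr (e : H.E) (d : Bool) :
    (glue G H s f1 f2).tsign (Sum.inr e, d) = H.tsign (e, d) := by cases d <;> rfl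

lemma gssign_inl (e : G.E) (d : Bool) :
    (glue G H s f1 f2).ssign (Sum.inl e, d) = G.ssign (e, d) := by cases d <;> rfl

lemma gtsign_inl (e : G.E) (d : Bool) :
    (glue G H s f1 f2).tsign (Sum.inl e, d) = G.tsign (e, d) := by cases d <;> rfl

lemma gsrc_inl_ne (e : G.E) (d : Bool) (h : G.src (e, d) ≠ s) :
    (glue G H s f1 f2).src (Sum.inl e, d) = Sum.inl (G.src (e, d)) := by
  cases d
  · exact if_neg h
  · exact if_neg h

lemma gsrc_inl_eq (e : G.E) (d : Bool) (h : G.src (e, d) = s) :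
    (glue G H s f1 f2).src (Sum.inl e, d) = Sum.inr (if d then f1 e else f2 e) := by
  cases d
  · exact if_pos h
  · exact if_pos h

lemma gtgt_inl_ne (e : G.E) (d : Bool) (h : G.tgt (e, d) ≠ s) :
    (glue G H s f1 f2).tgt (Sum.inl e, d) = Sum.inl (G.tgt (e, d)) := by
  cases d
  · exact if_neg h
  · exact if_neg h

lemma gtgt_inl_eq (e : G.E) (d : Bool) (h : G.tgt (e, d) = s) :
    (glue G H s f1 f2).tgt (Sum.inl e, d) = Sum.inr (if d then f2 e else f1 e) := by
  cases d
  · exact if_pos h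
  · exact if_pos h

lemma gsrc_inl_inv {e : G.E} {d : Bool} {w : VG}
    (h : (glue G H s f1 f2).src (Sum.inl e, d) = Sum.inl w) :
    G.src (e, d) = w ∧ G.src (e, d) ≠ s := by
  by_cases hs : G.src (e, d) = s
  · rw [gsrc_inl_eq e d hs] at h; exact absurd h (by simp)
  · rw [gsrc_inl_ne e d hs] at h; exact ⟨Sum.inl.inj h, hs⟩

lemma gtgt_inl_inv {e : G.E} {d : Bool} {w : VG}
    (h : (glue G H s f1 f2).tgt (Sum.inl e, d) = Sum.inl w) :
    G.tgt (e, d) = w ∧ G.tgt (e, d) ≠ s := by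
  by_cases hs : G.tgt (e, d) = s
  · rw [gtgt_inl_eq e d hs] at h; exact absurd h (by simp)
  · rw [gtgt_inl_ne e d hs] at h; exact ⟨Sum.inl.inj h, hs⟩

lemma gtgt_inl_inv_inr {e : G.E} {d : Bool} {t : VH}
    (h : (glue G H s f1 f2).tgt (Sum.inl e, d) = Sum.inr t) :
    G.tgt (e, d) = s := by
  by_cases hs : G.tgt (e, d) = s
  · exact hs
  · rw [gtgt_inl_ne e d hs] at h; exact absurd h (by simp)

/-- lifting `H`-ditrails into the glue -/
lemma liftH_ditrail {q : List H.Step} {x y : VH} (h : H.IsDitrail q x y) :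
    (glue G H s f1 f2).IsDitrail
      (q.map (fun st => (Sum.inr st.1, st.2))) (Sum.inr x) (Sum.inr y) := by
  obtain ⟨hnd, hch, hhd, hlast, hemp⟩ := h
  refine ⟨?_, ?_, ?_, ?_, ?_⟩
  · simp only [List.map_map]
    have h2 := hnd.map (f := (Sum.inr : H.E → (glue G H s f1 f2).E)) (fun a b => Sum.inr.inj)
    rw [List.map_map] at h2
    exact h2
  · refine List.isChain_map_of_isChain _ ?_ hch
    rintro ⟨e1, d1⟩ ⟨e2, d2⟩ ⟨h1, h2⟩
    exact ⟨by rw [gtgt_inr, gsrc_inr, h1], by rw [gtsign_inr, gssign_inr, h2]⟩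
  · intro st hst
    rw [List.head?_map] at hst
    obtain ⟨a, ha, rfl⟩ := Option.map_eq_some_iff.1 hst
    rw [gsrc_inr, hhd a ha]
  · intro st hst
    rw [List.getLast?_map] at hst
    obtain ⟨a, ha, rfl⟩ := Option.map_eq_some_iff.1 hst
    rw [gtgt_inr, hlast a ha]
  · intro hq
    rw [List.map_eq_nil_iff] at hq
    rw [hemp hq]

/-- appending ditrails -/
lemma ditrail_append {V : Type} {G : BG V} {p q : List G.Step} {x y z : V}
    (hp : G.IsDitrail p x y) (hq : G.IsDitrail q y z)
    (hdisj : ∀ st ∈ p, ∀ st' ∈ q, st.1 ≠ st'.1)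
    (hsign : ∀ a b, p.getLast? = some a → q.head? = some b → G.tsign a = !G.ssign b) :
    G.IsDitrail (p ++ q) x z := by
  obtain ⟨pnd, pch, phd, plast, pemp⟩ := hp
  obtain ⟨qnd, qch, qhd, qlast, qemp⟩ := hq
  refine ⟨?_, ?_, ?_, ?_, ?_⟩
  · rw [List.map_append]
    refine pnd.append qnd ?_
    intro a ha hb
    obtain ⟨u, hu, rfl⟩ := List.mem_map.1 ha
    obtain ⟨w, hw, hww⟩ := List.mem_map.1 hb
    exact hdisj u hu w hw hww.symm
  · refine pch.append qch ?_
    intro a ha b hb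
    have h1 := plast a ha
    have h2 := qhd b hb
    exact ⟨h1.trans h2.symm, hsign a b ha hb⟩
  · intro st hst
    cases p with
    | nil =>
      rw [pemp rfl]
      exact qhd st hst
    | cons a l =>
      simp only [List.cons_append, List.head?_cons] at hst
      exact phd st (by rw [List.head?_cons]; exact hst)
  · intro st hst
    cases q with
    | nil =>
      rw [← qemp rfl]
      rw [List.append_nil] at hst
      exact plast st hst
    | cons a l =>
      rw [List.getLast?_append_of_ne_nil _ (by simp)] at hst
      exact qlast st hst
  · intro h
    rw [List.append_eq_nil_iff] at h
    exact (pemp h.1).trans (qemp h.2)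


/-- projecting the initial segment of a glue-ditrail that starts on the `G` side -/
lemma cross : ∀ (p : List (glue G H s f1 f2).Step) (v : VG),
    (∃ y : VH, (glue G H s f1 f2).IsDitrail p (Sum.inl v) (Sum.inr y)) →
    ∃ q : List G.Step,
      G.IsDitrail q v s ∧
      (∀ st ∈ q, ((Sum.inl st.1, st.2) : (glue G H s f1 f2).Step) ∈ p) ∧
      (∃ st0 st0', p.head? = some st0 ∧ q.head? = some st0' ∧
        st0 = ((Sum.inl st0'.1, st0'.2) : (glue G H s f1 f2).Step)) ∧
      (∃ stl, q.getLast? = some stl ∧ G.src stl ≠ s) := by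
  intro p
  induction p with
  | nil =>
    rintro v ⟨y, hdit⟩
    exact absurd (hdit.2.2.2.2 rfl) (by simp)
  | cons st rest ih =>
    rintro v ⟨y, hnd, hch, hhd, hlast, -⟩
    have hsrc : (glue G H s f1 f2).src st = Sum.inl v := hhd st rfl
    obtain ⟨ee, d⟩ := st
    cases ee with
    | inr e' => rw [gsrc_inr] at hsrc; simp at hsrc
    | inl e =>
      obtain ⟨hsv, hsns⟩ := gsrc_inl_inv hsrc
      rcases htgt : (glue G H s f1 f2).tgt (Sum.inl e, d) with w | t
      · -- target still on the `G` side : recurse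
        obtain ⟨hw, hwns⟩ := gtgt_inl_inv htgt
        have hrestne : rest ≠ [] := by
          rintro rfl
          have h := hlast (Sum.inl e, d) (by simp)
          rw [htgt] at h; simp at h
        obtain ⟨b, rest', rfl⟩ := List.exists_cons_of_ne_nil hrestne
        have hch' := List.isChain_cons_cons.1 hch
        rw [List.map_cons, List.nodup_cons] at hnd
        have hrest : (glue G H s f1 f2).IsDitrail (b :: rest') (Sum.inl w) (Sum.inr y) := by
          refine ⟨hnd.2, hch'.2, ?_, ?_, by simp⟩
          · intro st' hst'
            rw [List.head?_cons] at hst'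
            obtain rfl := Option.some.inj hst'
            rw [← hch'.1.1, htgt]
          · intro st' hst'
            exact hlast st' (by rw [List.getLast?_cons_cons]; exact hst')
        obtain ⟨q', hq'dit, hq'mem, ⟨st0, a0, hp0, hq0, he0⟩, stl, hstl, hstlns⟩ :=
          ih w ⟨y, hrest⟩
        have hst0b : st0 = b := Option.some.inj (by rw [← hp0, List.head?_cons])
        cases q' with
        | nil => simp at hq0
        | cons a q'' =>
          rw [List.head?_cons] at hq0
          have haa : a = a0 := Option.some.inj hq0
          refine ⟨(e, d) :: a :: q'', ⟨?_, ?_, ?_, ?_, by simp⟩, ?_, ?_, ?_⟩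
          · rw [List.map_cons, List.nodup_cons]
            refine ⟨?_, hq'dit.1⟩
            intro hmem
            have hin : ((Sum.inl e : G.E ⊕ H.E)) ∈ List.map Prod.fst (b :: rest') := by
              obtain ⟨g, hg, hge⟩ := List.mem_map.1 hmem
              have := hq'mem g hg
              refine List.mem_map.2 ?_
              refine ⟨(Sum.inl g.1, g.2), this, ?_⟩
              show (Sum.inl g.1 : G.E ⊕ H.E) = Sum.inl e
              rw [hge]
            exact hnd.1 hin
          · apply List.isChain_cons_cons.2
            have hb := hch'.1
            have hbe : b = ((Sum.inl a0.1, a0.2) : (glue G H s f1 f2).Step) := by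
              rw [← hst0b]; exact he0
            rw [htgt, hbe, ← haa] at hb
            obtain ⟨hb1, hb2⟩ := hb
            obtain ⟨hbw, -⟩ := gsrc_inl_inv hb1.symm
            rw [gtsign_inl, gssign_inl] at hb2
            exact ⟨⟨by rw [hw, ← hbw], hb2⟩, hq'dit.2.1⟩
          · intro st' hst'
            rw [List.head?_cons] at hst'
            obtain rfl := Option.some.inj hst'
            exact hsv
          · intro st' hst'
            rw [List.getLast?_cons_cons] at hst'
            exact hq'dit.2.2.2.1 st' hst'
          · intro st hst
            rcases List.mem_cons.1 hst with h | h
            · rw [h]; exact List.mem_cons_self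
            · exact List.mem_cons_of_mem _ (hq'mem st h)
          · exact ⟨(Sum.inl e, d), (e, d), by simp, by simp, rfl⟩
          · exact ⟨stl, by rw [List.getLast?_cons_cons]; exact hstl, hstlns⟩
      · -- target on the `H` side : stop here
        have hts : G.tgt (e, d) = s := gtgt_inl_inv_inr htgt
        refine ⟨[(e, d)], ⟨by simp, List.IsChain.singleton _, ?_, ?_, by simp⟩, ?_, ?_, ?_⟩
        · intro st' hst'
          rw [List.head?_cons] at hst'
          obtain rfl := Option.some.inj hst'
          exact hsv
        · intro st' hst'
          simp only [List.getLast?_singleton] at hst'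
          obtain rfl := Option.some.inj hst'.symm
          exact hts
        · intro st hst
          simp only [List.mem_singleton] at hst
          rw [hst]; exact List.mem_cons_self
        · exact ⟨(Sum.inl e, d), (e, d), by simp, by simp, rfl⟩
        · exact ⟨(e, d), by simp, hsns⟩

/-- lifting the initial segment (up to the first arrival at `s`) of a `G`-ditrail to `s`
into the glue -/
lemma fwd : ∀ (p : List G.Step) (v : VG), G.IsDitrail p v s → v ≠ s →
    ∃ (P : List (glue G H s f1 f2).Step) (t : VH),
      (glue G H s f1 f2).IsDitrail P (Sum.inl v) (Sum.inr t) ∧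
      (∀ st ∈ P, ∃ g ∈ p, st = ((Sum.inl g.1, g.2) : (glue G H s f1 f2).Step)) ∧
      (∃ st0 st0', p.head? = some st0 ∧ P.head? = some st0' ∧
        st0' = ((Sum.inl st0.1, st0.2) : (glue G H s f1 f2).Step)) ∧
      (∃ stl, P.getLast? = some stl) := by
  intro p
  induction p with
  | nil =>
    rintro v hdit hv
    exact absurd (hdit.2.2.2.2 rfl) hv
  | cons st rest ih =>
    rintro v ⟨hnd, hch, hhd, hlast, -⟩ hv
    have hsv : G.src st = v := hhd st rfl
    obtain ⟨e, d⟩ := st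
    by_cases hts : G.tgt (e, d) = s
    · -- this step arrives at `s` : stop
      refine ⟨[(Sum.inl e, d)], if d then f2 e else f1 e,
        ⟨List.nodup_singleton _, List.IsChain.singleton _, ?_, ?_, by simp⟩, ?_, ?_, ⟨(Sum.inl e, d), by simp⟩⟩
      · intro st' hst'
        rw [List.head?_cons] at hst'
        obtain rfl := Option.some.inj hst'
        rw [gsrc_inl_ne e d (by rw [hsv]; exact hv), hsv]
      · intro st' hst'
        simp only [List.getLast?_singleton] at hst'
        obtain rfl := Option.some.inj hst'.symm
        exact gtgt_inl_eq e d hts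
      · intro st hst
        simp only [List.mem_singleton] at hst
        exact ⟨(e, d), List.mem_cons_self, hst⟩
      · exact ⟨(e, d), (Sum.inl e, d), by simp, by simp, rfl⟩
    · -- recurse
      have hrestne : rest ≠ [] := by
        rintro rfl
        exact hts (hlast (e, d) (by simp))
      obtain ⟨b, rest', rfl⟩ := List.exists_cons_of_ne_nil hrestne
      have hch' := List.isChain_cons_cons.1 hch
      rw [List.map_cons, List.nodup_cons] at hnd
      have hrest : G.IsDitrail (b :: rest') (G.tgt (e, d)) s := by
        refine ⟨hnd.2, hch'.2, ?_, ?_, by simp⟩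
        · intro st' hst'
          rw [List.head?_cons] at hst'
          obtain rfl := Option.some.inj hst'
          exact hch'.1.1.symm
        · intro st' hst'
          exact hlast st' (by rw [List.getLast?_cons_cons]; exact hst')
      obtain ⟨P', t, hP'dit, hP'mem, ⟨st0, a0, hp0, hP0, he0⟩, stl, hstl⟩ :=
        ih (G.tgt (e, d)) hrest hts
      have hst0b : st0 = b := Option.some.inj (by rw [← hp0, List.head?_cons])
      cases P' with
      | nil => simp at hP0
      | cons a P'' =>
        rw [List.head?_cons] at hP0
        have haa : a = a0 := Option.some.inj hP0
        refine ⟨(Sum.inl e, d) :: a :: P'', t, ⟨?_, ?_, ?_, ?_, by simp⟩, ?_, ?_, ?_⟩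
        · rw [List.map_cons, List.nodup_cons]
          refine ⟨?_, hP'dit.1⟩
          intro hmem
          have hin : e ∈ List.map Prod.fst (b :: rest') := by
            obtain ⟨g, hg, hge⟩ := List.mem_map.1 hmem
            obtain ⟨g', hg', rfl⟩ := hP'mem g hg
            simp only at hge
            obtain rfl := Sum.inl.inj hge
            rw [List.mem_map]
            exact ⟨g', hg', rfl⟩
          exact hnd.1 hin
        · apply List.isChain_cons_cons.2
          have hb := hch'.1
          have hbe : a = ((Sum.inl b.1, b.2) : (glue G H s f1 f2).Step) := by
            rw [haa, he0, hst0b]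
          rw [hbe]
          refine ⟨⟨?_, ?_⟩, hbe ▸ hP'dit.2.1⟩
          · rw [gtgt_inl_ne e d hts,
              gsrc_inl_ne b.1 b.2 (by rw [← hb.1]; exact hts)]
            rw [← hb.1]
          · rw [gtsign_inl, gssign_inl]
            exact hb.2
        · intro st' hst'
          rw [List.head?_cons] at hst'
          obtain rfl := Option.some.inj hst'
          rw [gsrc_inl_ne e d (by rw [hsv]; exact hv), hsv]
        · intro st' hst'
          rw [List.getLast?_cons_cons] at hst'
          exact hP'dit.2.2.2.1 st' hst'
        · intro st hst
          rcases List.mem_cons.1 hst with h | h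
          · exact ⟨(e, d), List.mem_cons_self, h⟩
          · obtain ⟨g, hg, hge⟩ := hP'mem st h
            exact ⟨g, List.mem_cons_of_mem _ hg, hge⟩
        · exact ⟨(e, d), (Sum.inl e, d), by simp, by simp, rfl⟩
        · exact ⟨stl, by rw [List.getLast?_cons_cons]; exact hstl⟩

/-- lifting an `H`-reach into the glue -/
lemma liftH_reach {γ β : Bool} {x y : VH} (h : H.Reach γ β x y)
    (Es : Set (glue G H s f1 f2).E)
    (hEs : ∀ e : H.E, ((Sum.inr e : G.E ⊕ H.E) : (glue G H s f1 f2).E) ∈ Es) :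
    (glue G H s f1 f2).ReachWA Es ∅ γ β (Sum.inr x) (Sum.inr y) := by
  obtain ⟨q, hq, -, -, -, hqh, hql⟩ := h
  refine ⟨q.map (fun st => (Sum.inr st.1, st.2)), liftH_ditrail hq, ?_,
    Set.notMem_empty _, fun st _ => Set.notMem_empty _, ?_, ?_⟩
  · rintro st hst
    obtain ⟨a, ha, rfl⟩ := List.mem_map.1 hst
    exact hEs a.1
  · rw [List.head?_map]
    cases hc : q.head? with
    | none => rw [hc] at hqh; simpa using hqh
    | some a =>
      rw [hc] at hqh
      simp only [Option.map_some, Option.getD_some] at hqh ⊢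
      show (glue G H s f1 f2).ssign (Sum.inr a.1, a.2) = γ
      rw [gssign_inr]
      exact hqh
  · rw [List.getLast?_map]
    cases hc : q.getLast? with
    | none => rw [hc] at hql; simp
    | some a =>
      rw [hc] at hql
      simp only [Option.map_some, Option.getD_some] at hql ⊢
      show (glue G H s f1 f2).tsign (Sum.inr a.1, a.2) = β
      rw [gtsign_inr]
      exact hql

end Helpers

end BG

theorem stmt17 {VG VH : Type} (G : BG VG) (H : BG VH) (α : Bool) (s : VG) (r : VH)
    (hG : G.IsSemiradial α s) (hsharp : G.SharpAt α s)
    (hH : ∀ γ : Bool, H.IsSemiradial γ r)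
    (f1 f2 : G.E → VH) :
    (∀ x : VG ⊕ VH, x ≠ Sum.inl s →
      (BG.glue G H s f1 f2).ReachS α x (Sum.inr r)) ∧
    (BG.glueHcopy G H s f1 f2).IsAbsolute (Sum.inr r) ∧
    (∀ K : (BG.glue G H s f1 f2).Sub, K.IsAbsolute (Sum.inr r) →
      K.le (BG.glueHcopy G H s f1 f2)) := by
  refine ⟨?_, ?_, ?_⟩
  · -- Part 1 : the gluing sum is an α-semiradial with root r
    rintro (v | v) hx
    · -- G-side vertex
      have hv : v ≠ s := fun h => hx (by rw [h])
      obtain ⟨β₀, p, hp, -, -, -, hph, hpl⟩ := hG v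
      obtain ⟨P, t, hPdit, hPmem, ⟨st0, st0', hp0, hP0, he0⟩, stl, hstl⟩ :=
        BG.fwd p v hp hv
      have hP0sign : (BG.glue G H s f1 f2).ssign st0' = α := by
        rw [he0, BG.gssign_inl]
        rw [hp0] at hph
        simpa using hph
      obtain ⟨β₁, hq⟩ := hH (!(BG.glue G H s f1 f2).tsign stl) t
      obtain ⟨q, hq, -, -, -, hqh, hql⟩ := hq
      cases hqe : q with
      | nil =>
        have htr : t = r := hq.2.2.2.2 hqe
        refine ⟨(BG.glue G H s f1 f2).tsign stl, P, htr ▸ hPdit,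
          fun st _ => Set.mem_univ _, Set.notMem_empty _,
          fun st _ => Set.notMem_empty _, ?_, ?_⟩
        · rw [hP0]; simpa using hP0sign
        · rw [hstl]; simp
      | cons c q' =>
        have hqne : q ≠ [] := by rw [hqe]; simp
        have hQdit := BG.liftH_ditrail (s := s) (f1 := f1) (f2 := f2) hq
        have hdisj : ∀ st ∈ P, ∀ st' ∈ q.map
            (fun st => ((Sum.inr st.1, st.2) : (BG.glue G H s f1 f2).Step)),
            st.1 ≠ st'.1 := by
          intro st hst st' hst'
          obtain ⟨g, -, rfl⟩ := hPmem st hst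
          obtain ⟨a, -, rfl⟩ := List.mem_map.1 hst'
          exact Sum.inl_ne_inr
        have hsign : ∀ a b, P.getLast? = some a →
            (q.map (fun st => ((Sum.inr st.1, st.2) : (BG.glue G H s f1 f2).Step))).head?
              = some b →
            (BG.glue G H s f1 f2).tsign a = !(BG.glue G H s f1 f2).ssign b := by
          intro a b ha hb
          have haa : a = stl := Option.some.inj (by rw [← hstl, ha])
          rw [List.head?_map] at hb
          obtain ⟨c', hc', rfl⟩ := Option.map_eq_some_iff.1 hb
          show _ = !(BG.glue G H s f1 f2).ssign (Sum.inr c'.1, c'.2)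
          rw [BG.gssign_inr]
          rw [hc'] at hqh
          simp only [Option.map_some, Option.getD_some] at hqh
          have : H.ssign (c'.1, c'.2) = !(BG.glue G H s f1 f2).tsign stl := hqh
          rw [this, Bool.not_not, haa]
        have hdit := BG.ditrail_append hPdit hQdit hdisj hsign
        have hPne : P ≠ [] := by rintro rfl; simp at hP0
        have hQne : q.map
            (fun st => ((Sum.inr st.1, st.2) : (BG.glue G H s f1 f2).Step)) ≠ [] := by
          simpa using hqne
        obtain ⟨lq, hlq⟩ : ∃ lq, q.getLast? = some lq := by
          cases hc : q.getLast? with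
          | none => rw [List.getLast?_eq_none_iff] at hc; exact absurd hc hqne
          | some a => exact ⟨a, rfl⟩
        refine ⟨β₁, P ++ q.map (fun st => ((Sum.inr st.1, st.2) :
            (BG.glue G H s f1 f2).Step)), hdit, fun st _ => Set.mem_univ _,
            Set.notMem_empty _, fun st _ => Set.notMem_empty _, ?_, ?_⟩
        · rw [List.head?_append_of_ne_nil _ hPne, hP0]
          simpa using hP0sign
        · rw [List.getLast?_append_of_ne_nil _ hQne, List.getLast?_map, hlq]
          simp only [Option.map_some, Option.getD_some]
          show (BG.glue G H s f1 f2).tsign (Sum.inr lq.1, lq.2) = β₁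
          rw [BG.gtsign_inr]
          rw [hlq] at hql
          simpa using hql
    · -- H-side vertex
      obtain ⟨β, hr⟩ := hH α v
      exact ⟨β, BG.liftH_reach hr Set.univ (fun e => Set.mem_univ _)⟩
  · -- Part 2 : the copy of H is an absolute semiradial with root r
    intro γ
    refine ⟨⟨r, rfl⟩, ?_⟩
    rintro v ⟨v', rfl⟩
    obtain ⟨β, hr⟩ := hH γ v'
    exact ⟨β, BG.liftH_reach hr (Set.range Sum.inr) (fun e => ⟨e, rfl⟩)⟩
  · -- Part 3 : every absolute subgraph is contained in the copy of H
    intro K hK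
    have key : ∀ v : VG, Sum.inl v ∈ K.verts →
        G.ReachS (!α) v s ∧ ∃ w : VG, G.Adj w s ∧ Sum.inl w ∈ K.verts := by
      intro v hv
      obtain ⟨β, p, hp, hpe, -, -, hph, hpl⟩ := (hK (!α)).2 (Sum.inl v) hv
      obtain ⟨q, hq, hqmem, ⟨st0, st0', hp0, hq0, he0⟩, stl, hstl, hstlns⟩ :=
        BG.cross p v ⟨r, hp⟩
      constructor
      · refine ⟨G.tsign stl, q, hq, fun st _ => Set.mem_univ _, Set.notMem_empty _,
          fun st _ => Set.notMem_empty _, ?_, ?_⟩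
        · rw [hq0]
          simp only [Option.map_some, Option.getD_some]
          have hs0 : (BG.glue G H s f1 f2).ssign st0 = !α := by
            rw [hp0] at hph; simpa using hph
          rw [he0, BG.gssign_inl] at hs0
          exact hs0
        · rw [hstl]; simp
      · refine ⟨G.src stl, ?_, ?_⟩
        · have hts : G.tgt stl = s := hq.2.2.2.1 stl hstl
          obtain ⟨e, d⟩ := stl
          cases d
          · exact ⟨e, Or.inr ⟨hts, rfl⟩⟩
          · exact ⟨e, Or.inl ⟨rfl, hts⟩⟩
        · have hmem := hqmem stl (List.mem_of_getLast? hstl)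
          have hedge := hpe _ hmem
          have hsrcK : (BG.glue G H s f1 f2).src (Sum.inl stl.1, stl.2) ∈ K.verts := by
            obtain ⟨e, d⟩ := stl
            cases d
            · exact K.snd_mem _ hedge
            · exact K.fst_mem _ hedge
          rw [BG.gsrc_inl_ne stl.1 stl.2 hstlns] at hsrcK
          exact hsrcK
    have hnol : ∀ v : VG, Sum.inl v ∉ K.verts := by
      intro v hv
      obtain ⟨-, w, hadj, hwK⟩ := key v hv
      obtain ⟨hwreach, -⟩ := key w hwK
      exact (hsharp w hadj).2 hwreach
    refine ⟨?_, ?_⟩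
    · rintro (v | v) hv
      · exact absurd hv (hnol v)
      · exact ⟨v, rfl⟩
    · rintro (e | e) he
      · exfalso
        have h1 := K.fst_mem _ he
        have h2 := K.snd_mem _ he
        have hfs : G.fst e = s := by
          by_cases h : G.fst e = s
          · exact h
          · exfalso
            have heq : (BG.glue G H s f1 f2).fst (Sum.inl e) = Sum.inl (G.fst e) :=
              if_neg h
            rw [heq] at h1
            exact hnol _ h1
        have hss : G.snd e = s := by
          by_cases h : G.snd e = s
          · exact h
          · exfalso
            have heq : (BG.glue G H s f1 f2).snd (Sum.inl e) = Sum.inl (G.snd e) :=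
              if_neg h
            rw [heq] at h2
            exact hnol _ h2
        refine (hsharp s ⟨e, Or.inl ⟨hfs, hss⟩⟩).2
          ⟨α, [], ⟨by simp, List.IsChain.nil, by simp, by simp, fun _ => rfl⟩,
            by simp, Set.notMem_empty _, by simp, by simp, by simp⟩
      · exact ⟨e, rfl⟩
end
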